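/- arXiv:1011.5053 — 10 statements merged into one kernel-verified Lean document; each statement's English description precedes it below -/
import Mathlib

section
/- Let d be a positive integer, let λ₁ ≥ λ₂ ≥ … ≥ λ_d ≥ 0 be real numbers, and for γ' > 0 define k_{γ'} = min{ k ∈ {0,1,…,d} : Σ_{i=k+1}^d λ_i ≤ γ'² · k }. Then for every γ > 0 and every α with 0 < α < 1, one has k_γ ≤ k_{αγ} and k_{αγ} ≤ 2·k_γ/α² + 1. -/
/-!
Write `S k` for the tail sum `Σ_{i ≥ k} λᵢ`, which is antitone in `k` because the `λᵢ` are
nonnegative. Shrinking `γ` only shrinks the set of admissible `k`, whence `k_γ ≤ k_{αγ}`.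
Conversely, if `m = k_γ` then `c = ⌈m / α²⌉` satisfies `m ≤ c` and
`S c ≤ S m ≤ γ² m ≤ (αγ)² c`, so `min d c` is admissible for `αγ` and
`k_{αγ} ≤ c < m / α² + 1`.
-/

open Finset

noncomputable def tailSum {d : ℕ} (lam : Fin d → ℝ) (k : ℕ) : ℝ :=
  ∑ i ∈ univ.filter (fun i : Fin d => k ≤ (i : ℕ)), lam i

lemma tailSum_antitone {d : ℕ} {lam : Fin d → ℝ} (hnonneg : ∀ i, 0 ≤ lam i) :
    Antitone (tailSum lam) := fun _ _ hmn =>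
  sum_le_sum_of_subset_of_nonneg (monotone_filter_right _ fun _ _ h => hmn.trans h)
    fun i _ _ => hnonneg i

lemma tailSum_self {d : ℕ} (lam : Fin d → ℝ) : tailSum lam d = 0 :=
  sum_eq_zero fun i hi => absurd (mem_filter.mp hi).2 (not_le.mpr i.isLt)

/-- The `γ`-adapted dimension is the least element of this set. -/
def admissibleDims (S : ℕ → ℝ) (d : ℕ) (γ : ℝ) : Set ℕ :=
  {k | k ≤ d ∧ S k ≤ γ ^ 2 * k}

section admissibleDims

variable {S : ℕ → ℝ} {d : ℕ}

lemma mem_admissibleDims_self (hS : S d ≤ 0) (γ : ℝ) : d ∈ admissibleDims S d γ :=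
  ⟨le_rfl, hS.trans (by positivity)⟩

lemma admissibleDims_mono {γ₁ γ₂ : ℝ} (h : γ₁ ^ 2 ≤ γ₂ ^ 2) :
    admissibleDims S d γ₁ ⊆ admissibleDims S d γ₂ := fun _ ⟨hk, hS⟩ =>
  ⟨hk, hS.trans (mul_le_mul_of_nonneg_right h (Nat.cast_nonneg _))⟩

lemma sInf_admissibleDims_le_sInf (hS : S d ≤ 0) {γ₁ γ₂ : ℝ} (h : γ₁ ^ 2 ≤ γ₂ ^ 2) :
    sInf (admissibleDims S d γ₂) ≤ sInf (admissibleDims S d γ₁) :=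
  Nat.sInf_le (admissibleDims_mono h (Nat.sInf_mem ⟨d, mem_admissibleDims_self hS γ₁⟩))

lemma min_ceil_mem_admissibleDims (hanti : Antitone S) (hS : S d ≤ 0) {γ α : ℝ} {m : ℕ}
    (hm : m ∈ admissibleDims S d γ) (hα0 : 0 < α) (hα1 : α ≤ 1) :
    min d ⌈(m : ℝ) / α ^ 2⌉₊ ∈ admissibleDims S d (α * γ) := by
  set c := ⌈(m : ℝ) / α ^ 2⌉₊
  rcases le_total d c with hdc | hcd
  · rw [min_eq_left hdc]
    exact mem_admissibleDims_self hS _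
  rw [min_eq_right hcd]
  have hα2 : 0 < α ^ 2 := by positivity
  have hmc : (m : ℝ) ≤ α ^ 2 * c := (div_le_iff₀' hα2).mp (Nat.le_ceil _)
  have hmc' : m ≤ c := by
    exact_mod_cast hmc.trans (mul_le_of_le_one_left (Nat.cast_nonneg _) (pow_le_one₀ hα0.le hα1))
  refine ⟨hcd, ?_⟩
  calc S c ≤ S m := hanti hmc'
    _ ≤ γ ^ 2 * m := hm.2
    _ ≤ γ ^ 2 * (α ^ 2 * c) := mul_le_mul_of_nonneg_left hmc (sq_nonneg γ)
    _ = (α * γ) ^ 2 * c := by ring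

lemma sInf_admissibleDims_lt (hanti : Antitone S) (hS : S d ≤ 0) {γ α : ℝ}
    (hα0 : 0 < α) (hα1 : α ≤ 1) :
    ((sInf (admissibleDims S d (α * γ)) : ℕ) : ℝ) <
      ((sInf (admissibleDims S d γ) : ℕ) : ℝ) / α ^ 2 + 1 := by
  have hm := Nat.sInf_mem ⟨d, mem_admissibleDims_self hS γ⟩
  calc ((sInf (admissibleDims S d (α * γ)) : ℕ) : ℝ)
      ≤ ⌈((sInf (admissibleDims S d γ) : ℕ) : ℝ) / α ^ 2⌉₊ := by
        exact_mod_cast (Nat.sInf_le (min_ceil_mem_admissibleDims hanti hS hm hα0 hα1)).trans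
          (min_le_right _ _)
    _ < _ := Nat.ceil_lt_add_one (by positivity)

end admissibleDims

theorem gamma_adapted_dimension_growth_general
    (d : ℕ) (lam : Fin d → ℝ)
    (hnonneg : ∀ i, 0 ≤ lam i)
    (k : ℝ → ℕ)
    (hk : ∀ γ' : ℝ, 0 < γ' →
      k γ' = sInf {kk : ℕ | kk ≤ d ∧
        ∑ i ∈ Finset.univ.filter (fun i : Fin d => kk ≤ (i : ℕ)), lam i ≤ γ' ^ 2 * kk})
    (γ α : ℝ) (hγ : 0 < γ) (hα0 : 0 < α) (hα1 : α < 1) :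
    k γ ≤ k (α * γ) ∧ (k (α * γ) : ℝ) ≤ 2 * (k γ : ℝ) / α ^ 2 + 1 := by
  have hk' : ∀ γ' > 0, k γ' = sInf (admissibleDims (tailSum lam) d γ') := hk
  have hS : tailSum lam d ≤ 0 := (tailSum_self lam).le
  rw [hk' γ hγ, hk' (α * γ) (mul_pos hα0 hγ)]
  refine ⟨sInf_admissibleDims_le_sInf hS ?_, ?_⟩
  · rw [mul_pow]
    exact mul_le_of_le_one_left (sq_nonneg γ) (pow_le_one₀ hα0.le hα1.le)
  · refine (sInf_admissibleDims_lt (tailSum_antitone hnonneg) hS hα0 hα1.le).le.trans ?_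
    gcongr
    linarith [Nat.cast_nonneg (α := ℝ) (sInf (admissibleDims (tailSum lam) d γ))]

/-- Let `λ₁ ≥ … ≥ λ_d ≥ 0` and for `γ' > 0` let
`k_{γ'} = min { k ∈ {0,…,d} : Σ_{i=k+1}^d λᵢ ≤ γ'² k }` (indices `0,…,d-1` in Lean,
so the sum is over indices `i ≥ k`).  Then for `γ > 0` and `0 < α < 1`,
`k_γ ≤ k_{αγ}` and `k_{αγ} ≤ 2 k_γ / α² + 1`. -/
theorem gamma_adapted_dimension_growth
    (d : ℕ) (hd : 0 < d) (lam : Fin d → ℝ)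
    (hmono : ∀ i j : Fin d, i ≤ j → lam j ≤ lam i)
    (hnonneg : ∀ i, 0 ≤ lam i)
    (k : ℝ → ℕ)
    (hk : ∀ γ' : ℝ, 0 < γ' →
      k γ' = sInf {kk : ℕ | kk ≤ d ∧
        ∑ i ∈ Finset.univ.filter (fun i : Fin d => kk ≤ (i : ℕ)), lam i ≤ γ' ^ 2 * kk})
    (γ α : ℝ) (hγ : 0 < γ) (hα0 : 0 < α) (hα1 : α < 1) :
    k γ ≤ k (α * γ) ∧ (k (α * γ) : ℝ) ≤ 2 * (k γ : ℝ) / α ^ 2 + 1 :=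
  gamma_adapted_dimension_growth_general d lam hnonneg k hk γ α hγ hα0 hα1
end

section
/- Let γ > 0, B ≥ 0, k ∈ ℕ, and let X ⊆ ℝ^d be a (B², k)-limited set. If a finite sequence of m distinct points of X is γ-shattered by unit-norm linear separators, then m ≤ (3/2)·(B²/γ² + k + 1). In particular, the γ-fat-shattering dimension of the class of linear functions x ↦ ⟨w,x⟩ with ‖w‖₂ ≤ 1 restricted to X is at most (3/2)·(B²/γ² + k + 1). -/
open scoped RealInnerProductSpace

/-- A set `X ⊆ ℝ^d` is `(b,k)`-limited: there is a subspace `V` of dimension `d - k`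
whose orthogonal projection `P` satisfies `‖Px‖² ≤ b` for every `x ∈ X`. -/
def IsLimitedSet {d : ℕ} (b : ℝ) (k : ℕ) (X : Set (EuclideanSpace ℝ (Fin d))) : Prop :=
  ∃ V : Submodule ℝ (EuclideanSpace ℝ (Fin d)), Module.finrank ℝ V = d - k ∧
    ∀ x ∈ X, ‖(V.orthogonalProjection x : EuclideanSpace ℝ (Fin d))‖ ^ 2 ≤ b

/-- A finite sequence `x₁,…,x_m` is `γ`-shattered by unit-norm linear separators:
there are biases `r₁,…,r_m` such that every sign vector `y ∈ {±1}^m` is realized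
with margin `γ` by some `w` with `‖w‖ ≤ 1`. -/
def GammaShattered {d m : ℕ} (γ : ℝ) (x : Fin m → EuclideanSpace ℝ (Fin d)) : Prop :=
  ∃ r : Fin m → ℝ, ∀ y : Fin m → ℝ, (∀ i, y i = 1 ∨ y i = -1) →
    ∃ w : EuclideanSpace ℝ (Fin d), ‖w‖ ≤ 1 ∧ ∀ i, γ ≤ y i * (⟪w, x i⟫ - r i)

/-!
Pairing the separators for `y` and `-y` removes the biases, so `γ ∑ |cᵢ| ≤ ‖∑ cᵢ xᵢ‖` for all
coefficients `c`. Write `xᵢ = uᵢ + qᵢ` with `uᵢ ∈ V`, `‖uᵢ‖ ≤ B`, and `qᵢ ∈ Vᗮ`, a space of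
dimension at most `k`. The coefficient vectors with `∑ cᵢ qᵢ = 0` form a subspace `K ⊆ ℝᵐ` of
dimension `R ≥ m - k`, on which the inequality only involves the `uᵢ`. Apply it to `c = P_K y`
for every sign vector `y` and average: `‖P_K y‖² = ⟪P_K y, y⟫ ≤ ∑ |cᵢ|` has mean `R`, while
`‖∑ cᵢ uᵢ‖²` has mean the squared Hilbert–Schmidt norm of `c ↦ ∑ cᵢ uᵢ` restricted to `K`, at most
`∑ ‖uᵢ‖² ≤ m B²`. Hence `γ² R² ≤ m B²`, and together with `m ≤ k + R` this gives
`m ≤ 3k/2 + 9B²/(8γ²)`.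
-/

open Finset Module

section HilbertSchmidt

variable {𝕜 E F ι κ : Type*} [RCLike 𝕜] [NormedAddCommGroup E] [InnerProductSpace 𝕜 E]
  [NormedAddCommGroup F] [InnerProductSpace 𝕜 F] [Fintype ι] [Fintype κ]

theorem OrthonormalBasis.sum_norm_apply_sq_eq_sum_norm_adjoint_apply_sq [CompleteSpace E]
    [CompleteSpace F] (e : OrthonormalBasis ι 𝕜 E) (f : OrthonormalBasis κ 𝕜 F) (T : E →L[𝕜] F) :
    ∑ i, ‖T (e i)‖ ^ 2 = ∑ j, ‖T.adjoint (f j)‖ ^ 2 := by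
  simp_rw [← f.sum_sq_norm_inner_right (T _), ← ContinuousLinearMap.adjoint_inner_left,
    ← e.sum_sq_norm_inner_left (T.adjoint _)]
  exact sum_comm

variable [FiniteDimensional 𝕜 E]

theorem OrthonormalBasis.sum_norm_starProjection_sq (e : OrthonormalBasis ι 𝕜 E)
    (K : Submodule 𝕜 E) : ∑ i, ‖K.starProjection (e i)‖ ^ 2 = finrank 𝕜 K := by
  have := FiniteDimensional.complete 𝕜 E
  have := FiniteDimensional.complete 𝕜 K
  simp_rw [K.starProjection_apply, Submodule.norm_coe]
  rw [e.sum_norm_apply_sq_eq_sum_norm_adjoint_apply_sq (stdOrthonormalBasis 𝕜 K),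
    K.adjoint_orthogonalProjectionOnto]
  simp [Submodule.subtypeL_apply, Submodule.norm_coe, OrthonormalBasis.norm_eq_one]

theorem OrthonormalBasis.sum_norm_apply_starProjection_sq_le [FiniteDimensional 𝕜 F]
    (e : OrthonormalBasis ι 𝕜 E) (T : E →L[𝕜] F) (K : Submodule 𝕜 E) :
    ∑ i, ‖T (K.starProjection (e i))‖ ^ 2 ≤ ∑ i, ‖T (e i)‖ ^ 2 := by
  have := FiniteDimensional.complete 𝕜 E
  have := FiniteDimensional.complete 𝕜 F
  let f := stdOrthonormalBasis 𝕜 F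
  have h := e.sum_norm_apply_sq_eq_sum_norm_adjoint_apply_sq f (T.comp K.starProjection)
  rw [ContinuousLinearMap.adjoint_comp, (isSelfAdjoint_starProjection K).adjoint_eq] at h
  simp only [ContinuousLinearMap.comp_apply] at h
  rw [h, e.sum_norm_apply_sq_eq_sum_norm_adjoint_apply_sq f]
  gcongr
  exact K.norm_starProjection_apply_le _

end HilbertSchmidt

section SignVectors

variable {ι E : Type*} [Fintype ι]

noncomputable def signVector (σ : ι → ℤˣ) : EuclideanSpace ℝ ι :=
  WithLp.toLp 2 fun i => ((σ i : ℤ) : ℝ)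

theorem inner_signVector_le (c : EuclideanSpace ℝ ι) (σ : ι → ℤˣ) :
    ⟪c, signVector σ⟫ ≤ ∑ i, |c i| := by
  rw [PiLp.inner_apply]
  gcongr with i
  rcases Int.units_eq_one_or (σ i) with h | h <;> simp [signVector, h, le_abs_self, neg_le_abs]

theorem norm_starProjection_signVector_sq_le (K : Submodule ℝ (EuclideanSpace ℝ ι))
    (σ : ι → ℤˣ) :
    ‖K.starProjection (signVector σ)‖ ^ 2 ≤ ∑ i, |K.starProjection (signVector σ) i| := by
  have h := K.re_inner_starProjection_eq_normSq (signVector σ)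
  rw [RCLike.re_to_real, ← Submodule.norm_coe, ← K.starProjection_apply] at h
  exact h ▸ inner_signVector_le _ σ

variable [DecidableEq ι]

theorem sum_units_mul_units (j l : ι) :
    ∑ σ : ι → ℤˣ, (σ j * σ l : ℤ) = if j = l then 2 ^ Fintype.card ι else 0 := by
  split_ifs with hjl
  · subst hjl
    simp [← Units.val_mul, Int.units_mul_self]
  · let flip (σ : ι → ℤˣ) : ι → ℤˣ := Function.update σ j (-σ j)
    have hflip : Function.Involutive flip := fun σ => by
      ext1 i; by_cases hi : i = j <;> simp [flip, hi]
    have h := Fintype.sum_bijective flip hflip.bijective (fun σ => (flip σ j * flip σ l : ℤ))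
      (fun σ => (σ j * σ l : ℤ)) fun _ => rfl
    simp [flip, Function.update_of_ne (Ne.symm hjl)] at h
    omega

variable [NormedAddCommGroup E] [InnerProductSpace ℝ E]

theorem sum_norm_sum_units_smul_sq (z : ι → E) :
    ∑ σ : ι → ℤˣ, ‖∑ j, ((σ j : ℤ) : ℝ) • z j‖ ^ 2 = 2 ^ Fintype.card ι * ∑ j, ‖z j‖ ^ 2 := by
  have expand (σ : ι → ℤˣ) : ‖∑ j, ((σ j : ℤ) : ℝ) • z j‖ ^ 2
      = ∑ j, ∑ l, ((σ j * σ l : ℤ) : ℝ) * ⟪z j, z l⟫ := by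
    simp_rw [← real_inner_self_eq_norm_sq, sum_inner, inner_sum, real_inner_smul_left,
      real_inner_smul_right, Int.cast_mul]
    exact sum_congr rfl fun j _ => sum_congr rfl fun l _ => by ring
  simp_rw [expand]
  rw [sum_comm]
  simp_rw [sum_comm (γ := ι → ℤˣ), ← sum_mul, ← Int.cast_sum, sum_units_mul_units]
  simp [mul_sum]

theorem sum_norm_map_signVector_sq (T : EuclideanSpace ℝ ι →ₗ[ℝ] E) :
    ∑ σ : ι → ℤˣ, ‖T (signVector σ)‖ ^ 2 =
      2 ^ Fintype.card ι * ∑ j, ‖T (EuclideanSpace.basisFun ι ℝ j)‖ ^ 2 := by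
  have h (σ : ι → ℤˣ) :
      T (signVector σ) = ∑ j, ((σ j : ℤ) : ℝ) • T (EuclideanSpace.basisFun ι ℝ j) := by
    conv_lhs => rw [← (EuclideanSpace.basisFun ι ℝ).sum_repr (signVector σ)]
    simp [signVector]
  simp_rw [h, sum_norm_sum_units_smul_sq]

end SignVectors

section LinearCombination

variable {ι F : Type*} [Fintype ι] [NormedAddCommGroup F] [InnerProductSpace ℝ F]

noncomputable def linearCombinationL (u : ι → F) : EuclideanSpace ℝ ι →L[ℝ] F :=
  LinearMap.toContinuousLinearMap
    ((Fintype.linearCombination ℝ u).comp (WithLp.linearEquiv 2 ℝ (ι → ℝ)).toLinearMap)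

@[simp]
theorem linearCombinationL_apply (u : ι → F) (c : EuclideanSpace ℝ ι) :
    linearCombinationL u c = ∑ i, c i • u i := by
  simp [linearCombinationL, Fintype.linearCombination_apply]

variable [DecidableEq ι] [FiniteDimensional ℝ F]

theorem sq_mul_finrank_le_sum_norm_sq (K : Submodule ℝ (EuclideanSpace ℝ ι)) (u : ι → F)
    {γ : ℝ} (hγ : 0 ≤ γ) (hK : ∀ c ∈ K, γ * ∑ i, |c i| ≤ ‖∑ i, c i • u i‖) :
    (γ * finrank ℝ K) ^ 2 ≤ ∑ i, ‖u i‖ ^ 2 := by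
  set A := linearCombinationL u
  set P := K.starProjection
  set e := EuclideanSpace.basisFun ι ℝ
  set N : ℝ := 2 ^ Fintype.card ι
  have hN : 0 < N := by positivity
  have hσ (σ : ι → ℤˣ) : γ * ‖P (signVector σ)‖ ^ 2 ≤ ‖A (P (signVector σ))‖ :=
    calc γ * ‖P (signVector σ)‖ ^ 2 ≤ γ * ∑ i, |P (signVector σ) i| :=
          mul_le_mul_of_nonneg_left (norm_starProjection_signVector_sq_le K σ) hγ
      _ ≤ ‖A (P (signVector σ))‖ := by
          rw [linearCombinationL_apply]; exact hK _ (K.starProjection_apply_mem _)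
  have hP : ∑ σ : ι → ℤˣ, ‖P (signVector σ)‖ ^ 2 = N * finrank ℝ K := by
    rw [← e.sum_norm_starProjection_sq K]
    exact sum_norm_map_signVector_sq P.toLinearMap
  have hAP : ∑ σ : ι → ℤˣ, ‖A (P (signVector σ))‖ ^ 2 ≤ N * ∑ i, ‖u i‖ ^ 2 := by
    calc ∑ σ : ι → ℤˣ, ‖A (P (signVector σ))‖ ^ 2 = N * ∑ j, ‖A (P (e j))‖ ^ 2 :=
          sum_norm_map_signVector_sq (A.comp P).toLinearMap
      _ ≤ N * ∑ j, ‖A (e j)‖ ^ 2 :=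
          mul_le_mul_of_nonneg_left (e.sum_norm_apply_starProjection_sq_le A K) hN.le
      _ = N * ∑ i, ‖u i‖ ^ 2 := by simp [A, e]
  have hCS : (∑ σ : ι → ℤˣ, ‖A (P (signVector σ))‖) ^ 2 ≤
      N * ∑ σ : ι → ℤˣ, ‖A (P (signVector σ))‖ ^ 2 := by
    simpa [N] using sq_sum_le_card_mul_sum_sq (s := univ)
      (f := fun σ : ι → ℤˣ => ‖A (P (signVector σ))‖)
  have hmean : N * (γ * finrank ℝ K) ≤ ∑ σ : ι → ℤˣ, ‖A (P (signVector σ))‖ := by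
    calc N * (γ * finrank ℝ K) = γ * ∑ σ : ι → ℤˣ, ‖P (signVector σ)‖ ^ 2 := by rw [hP]; ring
      _ ≤ _ := by rw [mul_sum]; exact sum_le_sum fun σ _ => hσ σ
  have : N ^ 2 * (γ * finrank ℝ K) ^ 2 ≤ N ^ 2 * ∑ i, ‖u i‖ ^ 2 := by
    calc N ^ 2 * (γ * finrank ℝ K) ^ 2 = (N * (γ * finrank ℝ K)) ^ 2 := by ring
      _ ≤ (∑ σ : ι → ℤˣ, ‖A (P (signVector σ))‖) ^ 2 := by gcongr
      _ ≤ N * (N * ∑ i, ‖u i‖ ^ 2) := hCS.trans (by gcongr)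
      _ = N ^ 2 * ∑ i, ‖u i‖ ^ 2 := by ring
  exact le_of_mul_le_mul_left this (by positivity)

theorem exists_subspace_card_le_and_sq_mul_finrank_le (V : Submodule ℝ F) (x : ι → F) {γ : ℝ}
    (hγ : 0 ≤ γ) (hx : ∀ c : ι → ℝ, γ * ∑ i, |c i| ≤ ‖∑ i, c i • x i‖) :
    ∃ K : Submodule ℝ (EuclideanSpace ℝ ι), Fintype.card ι ≤ finrank ℝ Vᗮ + finrank ℝ K ∧
      (γ * finrank ℝ K) ^ 2 ≤ ∑ i, ‖V.starProjection (x i)‖ ^ 2 := by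
  set L := (linearCombinationL fun i => Vᗮ.starProjection (x i)).toLinearMap
  refine ⟨LinearMap.ker L, ?_, sq_mul_finrank_le_sum_norm_sq _ _ hγ fun c hc => ?_⟩
  · have hrange : LinearMap.range L ≤ Vᗮ := by
      rintro _ ⟨c, rfl⟩
      simpa [L] using sum_mem fun i _ => Vᗮ.smul_mem (c i) (Vᗮ.starProjection_apply_mem (x i))
    have := L.finrank_range_add_finrank_ker
    have := Submodule.finrank_mono hrange
    simp only [finrank_euclideanSpace] at *
    omega
  · have hLc : ∑ i, c i • Vᗮ.starProjection (x i) = 0 := by simpa [L] using hc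
    calc γ * ∑ i, |c i| ≤ ‖∑ i, c i • x i‖ := hx c
      _ = ‖∑ i, (c i • V.starProjection (x i) + c i • Vᗮ.starProjection (x i))‖ := by
        simp only [← smul_add, V.starProjection_add_starProjection_orthogonal]
      _ = ‖∑ i, c i • V.starProjection (x i)‖ := by rw [sum_add_distrib, hLc, add_zero]

end LinearCombination

section Shattering

variable {d m : ℕ} {γ : ℝ} {x : Fin m → EuclideanSpace ℝ (Fin d)}

theorem GammaShattered.exists_forall_le_mul_inner (h : GammaShattered γ x) (y : Fin m → ℝ)
    (hy : ∀ i, y i = 1 ∨ y i = -1) : ∃ w, ‖w‖ ≤ 1 ∧ ∀ i, γ ≤ y i * ⟪w, x i⟫ := by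
  obtain ⟨r, hr⟩ := h
  obtain ⟨w₁, hw₁, h₁⟩ := hr y hy
  obtain ⟨w₂, hw₂, h₂⟩ := hr (-y) fun i => by rcases hy i with h | h <;> simp [h]
  refine ⟨(1 / 2 : ℝ) • (w₁ - w₂), ?_, fun i => ?_⟩
  · have := norm_sub_le w₁ w₂
    rw [norm_smul]
    norm_num
    linarith
  · have h₂i := h₂ i
    simp only [Pi.neg_apply] at h₂i
    rw [real_inner_smul_left, inner_sub_left]
    linear_combination (h₁ i + h₂i) / 2

theorem GammaShattered.mul_sum_abs_le_norm_sum (h : GammaShattered γ x) (c : Fin m → ℝ) :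
    γ * ∑ i, |c i| ≤ ‖∑ i, c i • x i‖ := by
  obtain ⟨w, hw, hwx⟩ := h.exists_forall_le_mul_inner (fun i => if 0 ≤ c i then 1 else -1)
    fun i => by split_ifs <;> simp
  have hi (i : Fin m) : γ * |c i| ≤ c i * ⟪w, x i⟫ := by
    have := hwx i
    split_ifs at this with hc
    · rw [abs_of_nonneg hc]; nlinarith
    · rw [abs_of_neg (not_le.mp hc)]; nlinarith
  calc γ * ∑ i, |c i| ≤ ∑ i, c i * ⟪w, x i⟫ := by rw [mul_sum]; exact sum_le_sum fun i _ => hi i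
    _ = ⟪w, ∑ i, c i • x i⟫ := by simp_rw [inner_sum, real_inner_smul_right]
    _ ≤ ‖w‖ * ‖∑ i, c i • x i‖ := real_inner_le_norm _ _
    _ ≤ ‖∑ i, c i • x i‖ := mul_le_of_le_one_left (norm_nonneg _) hw

end Shattering

theorem le_of_sq_le_mul_of_le_add {m k R b : ℝ} (hm : 0 ≤ m) (hb : 0 ≤ b) (hR : R ^ 2 ≤ m * b)
    (hmR : m ≤ k + R) : m ≤ 3 / 2 * k + 9 / 8 * b := by
  nlinarith [sq_nonneg (m / 3 - 3 * b / 4)]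

theorem fat_shattering_of_limited_general
    (d m k : ℕ) (γ B : ℝ) (hγ : 0 < γ)
    (X : Set (EuclideanSpace ℝ (Fin d)))
    (hlim : IsLimitedSet (B ^ 2) k X)
    (x : Fin m → EuclideanSpace ℝ (Fin d))
    (hmem : ∀ i, x i ∈ X)
    (hshat : GammaShattered γ x) :
    (m : ℝ) ≤ 3 / 2 * (B ^ 2 / γ ^ 2 + k + 1) := by
  obtain ⟨V, hV, hVB⟩ := hlim
  obtain ⟨K, hcard, hK⟩ := exists_subspace_card_le_and_sq_mul_finrank_le V x hγ.le
    hshat.mul_sum_abs_le_norm_sum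
  have hVperp : finrank ℝ Vᗮ ≤ k := by
    have := V.finrank_add_finrank_orthogonal
    rw [hV, finrank_euclideanSpace_fin] at this
    omega
  have hu : ∑ i, ‖V.starProjection (x i)‖ ^ 2 ≤ m * B ^ 2 := by
    simpa using sum_le_sum (s := univ) fun i _ => hVB (x i) (hmem i)
  have hR : (finrank ℝ K : ℝ) ^ 2 ≤ m * (B ^ 2 / γ ^ 2) := by
    rw [mul_div_assoc', le_div_iff₀ (by positivity)]
    linarith
  have hmR : (m : ℝ) ≤ k + finrank ℝ K := by
    exact_mod_cast (Fintype.card_fin m).symm.trans_le (hcard.trans (by omega))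
  have hb : 0 ≤ B ^ 2 / γ ^ 2 := by positivity
  linarith [le_of_sq_le_mul_of_le_add m.cast_nonneg hb hR hmR]

/-- If `X ⊆ ℝ^d` is `(B², k)`-limited and a sequence of `m` distinct
points of `X` is `γ`-shattered by unit-norm linear separators, then
`m ≤ (3/2)(B²/γ² + k + 1)`; hence the `γ`-fat-shattering dimension of the class of
unit-norm linear functions on `X` is at most `(3/2)(B²/γ² + k + 1)`. -/
theorem fat_shattering_of_limited
    (d m k : ℕ) (hkd : k ≤ d) (γ B : ℝ) (hγ : 0 < γ) (hB : 0 ≤ B)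
    (X : Set (EuclideanSpace ℝ (Fin d)))
    (hlim : IsLimitedSet (B ^ 2) k X)
    (x : Fin m → EuclideanSpace ℝ (Fin d))
    (hinj : Function.Injective x) (hmem : ∀ i, x i ∈ X)
    (hshat : GammaShattered γ x) :
    (m : ℝ) ≤ 3 / 2 * (B ^ 2 / γ ^ 2 + k + 1) :=
  fat_shattering_of_limited_general d m k γ B hγ X hlim x hmem hshat
end

section
/- Let S = (x₁,…,x_m) be a sequence of points in ℝ^d and let X be the m×d matrix whose rows are x₁,…,x_m. If S is γ-shattered by unit-norm linear separators, then for every ε > 0 there exists a column vector r ∈ ℝ^m such that, letting X̃ = (X | r) be the m×(d+1) matrix obtained by appending r as an extra column, for every y ∈ {−γ, +γ}^m there exists w_y ∈ ℝ^{d+1} with ‖w_y‖₂ ≤ 1 + ε and X̃ w_y = y. -/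
open Matrix

/-! The offsets are rescaled to `r = -r₀ / ε`, so that a separator `w` of the shattering with
offsets `r₀` extends to `(w, ε)`, of norm at most `1 + ε`, with `X̃ (w, ε) = X w - r₀`.
The image `K` of the `(1 + ε)`-ball under `X̃` is compact and convex, so `y ∈ K` as soon as
`u ⬝ y ≤ max_K u ⬝ ·` for every `u`. Shattering with the labels `sign u` gives a point
`X w - r₀ ∈ K` whose `i`-th coordinate has sign `sign uᵢ` and size at least `γ`, hence
`u ⬝ (X w - r₀) ≥ ∑ |uᵢ| γ ≥ u ⬝ y`. -/

/-- A finite sequence of points (the rows of `X`) is `γ`-shattered by unit-norm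
linear separators. -/
def GammaShatteredRows {m d : ℕ} (γ : ℝ) (X : Matrix (Fin m) (Fin d) ℝ) : Prop :=
  ∃ r : Fin m → ℝ, ∀ y : Fin m → ℝ, (∀ i, y i = 1 ∨ y i = -1) →
    ∃ w : Fin d → ℝ, ∑ j, (w j) ^ 2 ≤ 1 ∧ ∀ i, γ ≤ y i * ((∑ j, w j * X i j) - r i)

theorem exists_mulVec_eq_of_forall_dotProduct_le {ι n : Type*} [Fintype ι] [Fintype n]
    (M : Matrix ι n ℝ) (R : ℝ) {y : ι → ℝ}
    (h : ∀ u : ι → ℝ, ∃ w : n → ℝ, ∑ j, w j ^ 2 ≤ R ^ 2 ∧ u ⬝ᵥ y ≤ u ⬝ᵥ M *ᵥ w) :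
    ∃ w : n → ℝ, ∑ j, w j ^ 2 ≤ R ^ 2 ∧ M *ᵥ w = y := by
  classical
  let L : EuclideanSpace ℝ n →ₗ[ℝ] ι → ℝ :=
    M.mulVecLin ∘ₗ (EuclideanSpace.equiv n ℝ).toLinearMap
  have hball : ∀ w : n → ℝ, ∑ j, w j ^ 2 ≤ R ^ 2 ↔
      WithLp.toLp 2 w ∈ Metric.closedBall (0 : EuclideanSpace ℝ n) |R| := by
    intro w
    rw [EuclideanSpace.closedBall_zero_eq _ (abs_nonneg R), sq_abs]
    rfl
  have hconv : Convex ℝ (L '' Metric.closedBall 0 |R|) :=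
    (convex_closedBall _ _).linear_image L
  have hclosed : IsClosed (L '' Metric.closedBall 0 |R|) :=
    ((isCompact_closedBall _ _).image L.continuous_of_finiteDimensional).isClosed
  suffices y ∈ L '' Metric.closedBall 0 |R| by
    obtain ⟨x, hx, rfl⟩ := this
    exact ⟨x.ofLp, (hball _).2 hx, rfl⟩
  rw [← iInter_halfSpaces_eq hconv hclosed, Set.mem_iInter]
  intro f
  have hf : ∀ v : ι → ℝ, f v = (fun i => f (Pi.single i 1)) ⬝ᵥ v := by
    intro v
    conv_lhs => rw [pi_eq_sum_univ' v]
    simp only [map_sum, map_smul, smul_eq_mul, dotProduct, mul_comm]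
  obtain ⟨w, hw, hle⟩ := h fun i => f (Pi.single i 1)
  refine ⟨L (WithLp.toLp 2 w), ⟨_, (hball w).1 hw, rfl⟩, ?_⟩
  rw [hf y, hf]
  exact hle

theorem mul_le_mul_of_sign_margin {γ a u v : ℝ} (hγ : 0 ≤ γ) (ha : a = γ ∨ a = -γ)
    (hv : γ ≤ (if 0 ≤ u then 1 else -1) * v) : u * a ≤ u * v := by
  split_ifs at hv with hu <;> rcases ha with rfl | rfl <;> nlinarith

theorem dotProduct_le_of_sign_margin {ι : Type*} [Fintype ι] {γ : ℝ} (hγ : 0 ≤ γ)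
    {u y v : ι → ℝ} (hy : ∀ i, y i = γ ∨ y i = -γ)
    (hv : ∀ i, γ ≤ (if 0 ≤ u i then 1 else -1) * v i) : u ⬝ᵥ y ≤ u ⬝ᵥ v :=
  Finset.sum_le_sum fun i _ => mul_le_mul_of_sign_margin hγ (hy i) (hv i)

def appendCol {α : Type*} {m d : ℕ} (X : Matrix (Fin m) (Fin d) α) (r : Fin m → α) :
    Matrix (Fin m) (Fin (d + 1)) α :=
  of fun i j => if h : (j : ℕ) < d then X i ⟨j, h⟩ else r i

theorem appendCol_mulVec_snoc {α : Type*} [CommSemiring α] {m d : ℕ}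
    (X : Matrix (Fin m) (Fin d) α) (r : Fin m → α) (w : Fin d → α) (t : α) :
    appendCol X r *ᵥ Fin.snoc w t = X *ᵥ w + t • r := by
  ext i
  simp [appendCol, mulVec, dotProduct, Fin.sum_univ_castSucc, mul_comm]

theorem sum_sq_snoc {α : Type*} [CommSemiring α] {d : ℕ} (w : Fin d → α) (t : α) :
    ∑ j, (Fin.snoc w t : Fin (d + 1) → α) j ^ 2 = ∑ j, w j ^ 2 + t ^ 2 := by
  simp [Fin.sum_univ_castSucc]

/-- If the rows of `X` are `γ`-shattered, then for every `ε > 0`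
there is a column `r ∈ ℝ^m` such that, appending `r` to `X` to form `X̃`, every
`y ∈ {−γ,+γ}^m` is realized exactly: `X̃ w_y = y` for some `w_y` with
`‖w_y‖ ≤ 1 + ε`. -/
theorem shattered_exact_margins
    (m d : ℕ) (γ : ℝ) (hγ : 0 < γ)
    (X : Matrix (Fin m) (Fin d) ℝ)
    (hshat : GammaShatteredRows γ X) :
    ∀ ε : ℝ, 0 < ε → ∃ r : Fin m → ℝ,
      ∀ y : Fin m → ℝ, (∀ i, y i = γ ∨ y i = -γ) →
        ∃ w : Fin (d + 1) → ℝ, ∑ j, (w j) ^ 2 ≤ (1 + ε) ^ 2 ∧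
          (Matrix.of fun (i : Fin m) (j : Fin (d + 1)) =>
              if h : (j : ℕ) < d then X i ⟨j, h⟩ else r i).mulVec w = y := by
  intro ε hε
  obtain ⟨r₀, hr₀⟩ := hshat
  refine ⟨-ε⁻¹ • r₀, fun y hy => ?_⟩
  refine exists_mulVec_eq_of_forall_dotProduct_le (appendCol X (-ε⁻¹ • r₀)) _ fun u => ?_
  obtain ⟨w₀, hw₀, hmargin⟩ :=
    hr₀ (fun i => if 0 ≤ u i then 1 else -1) fun i => by split_ifs <;> simp
  refine ⟨Fin.snoc w₀ ε, by rw [sum_sq_snoc]; nlinarith, ?_⟩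
  rw [appendCol_mulVec_snoc, smul_smul, mul_neg, mul_inv_cancel₀ hε.ne', neg_one_smul,
    ← sub_eq_add_neg]
  refine dotProduct_le_of_sign_margin hγ.le hy fun i => ?_
  simpa [mulVec, dotProduct, mul_comm] using hmargin i
end

section
/- Let S = (x₁,…,x_m) be a sequence of points in ℝ^d and let X be the m×d matrix whose rows are x₁,…,x_m. Then S is 1-shattered at the origin if and only if the m×m Gram matrix XXᵀ is invertible and for every sign vector y ∈ {±1}^m one has yᵀ(XXᵀ)⁻¹y ≤ 1. -/
/-!
If the rows of `X` are 1-shattered, the image `K` of the Euclidean unit ball under `w ↦ X w` is a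
convex set meeting every orthant region `{z | ∀ i, 1 ≤ εᵢ zᵢ}`. Interpolating between witnesses for
sign vectors differing in one coordinate, one fixes the coordinates one by one, so `K` contains the
whole cube `[-1, 1]^m`. Hence `X` is surjective and `X Xᵀ` is invertible, and every sign vector `y`
equals `X w` for some `‖w‖ ≤ 1`. Since `Xᵀ (X Xᵀ)⁻¹ y` is the least-norm solution of `X w = y`, with
squared norm `yᵀ (X Xᵀ)⁻¹ y`, this gives the inequality, and the same vector proves the converse.
-/

open Matrix

/-- The rows of `X` are `1`-shattered at the origin: every sign vector `y ∈ {±1}^m`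
is realized with margin `1` and zero bias by some `w` with `‖w‖ ≤ 1`. -/
def OneShatteredAtOrigin {m d : ℕ} (X : Matrix (Fin m) (Fin d) ℝ) : Prop :=
  ∀ y : Fin m → ℝ, (∀ i, y i = 1 ∨ y i = -1) →
    ∃ w : Fin d → ℝ, ∑ j, (w j) ^ 2 ≤ 1 ∧ ∀ i, 1 ≤ y i * (X.mulVec w i)

section Orthants

variable {ι : Type*} {K : Set (ι → ℝ)} {y : ι → ℝ}

theorem exists_mem_segment_apply_eq {x x' : ι → ℝ} (a : ι) {c : ℝ}
    (hc : c ∈ segment ℝ (x a) (x' a)) : ∃ z ∈ segment ℝ x x', z a = c := by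
  have := image_segment ℝ (LinearMap.proj (R := ℝ) (φ := fun _ : ι => ℝ) a).toAffineMap x x'
  simp only [LinearMap.coe_toAffineMap, LinearMap.coe_proj, Function.eval] at this
  rw [← this] at hc
  simpa using hc

variable [DecidableEq ι]

theorem Convex.exists_eqOn_of_forall_signs (hK : Convex ℝ K) (hy : ∀ i, |y i| ≤ 1)
    (hKε : ∀ ε : ι → ℝ, (∀ i, ε i = 1 ∨ ε i = -1) → ∃ z ∈ K, ∀ i, 1 ≤ ε i * z i)
    (s : Finset ι) (ε : ι → ℝ) (hε : ∀ i, ε i = 1 ∨ ε i = -1) :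
    ∃ z ∈ K, (∀ i ∈ s, z i = y i) ∧ ∀ i ∉ s, 1 ≤ ε i * z i := by
  induction s using Finset.induction_on generalizing ε with
  | empty => simpa using hKε ε hε
  | @insert a s ha ih =>
    have hupdate (c : ℝ) (hc : c = 1 ∨ c = -1) : ∀ i, Function.update ε a c i = 1 ∨
        Function.update ε a c i = -1 := by
      intro i
      rcases eq_or_ne i a with rfl | h
      · simpa
      · simpa [h] using hε i
    let H := {z ∈ K | (∀ i ∈ s, z i = y i) ∧ ∀ i ∉ insert a s, 1 ≤ ε i * z i}
    have hH : Convex ℝ H := by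
      rintro z ⟨hzK, hzs, hzε⟩ z' ⟨hz'K, hz's, hz'ε⟩ t t' ht ht' htt'
      refine ⟨hK hzK hz'K ht ht' htt', fun i hi => ?_, fun i hi => ?_⟩
      · simp [hzs i hi, hz's i hi, ← add_mul, htt']
      · have := hzε i hi
        have := hz'ε i hi
        simp only [Pi.add_apply, Pi.smul_apply, smul_eq_mul]
        nlinarith
    obtain ⟨zp, hzpK, hzps, hzpε⟩ := ih (Function.update ε a 1) (hupdate 1 (by norm_num))
    obtain ⟨zm, hzmK, hzms, hzmε⟩ := ih (Function.update ε a (-1)) (hupdate (-1) (by norm_num))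
    have mem_H {z c} (hzK : z ∈ K) (hzs : ∀ i ∈ s, z i = y i)
        (hzε : ∀ i ∉ s, 1 ≤ Function.update ε a c i * z i) : z ∈ H := by
      refine ⟨hzK, hzs, fun i hi => ?_⟩
      rw [Finset.mem_insert, not_or] at hi
      simpa [hi.1] using hzε i hi.2
    have hpa : 1 ≤ zp a := by simpa using hzpε a ha
    have hma : zm a ≤ -1 := by linarith [show 1 ≤ -zm a by simpa using hzmε a ha]
    have hya : y a ∈ segment ℝ (zm a) (zp a) := by
      rw [segment_eq_Icc (by linarith)]
      exact ⟨by linarith [(abs_le.mp (hy a)).1], by linarith [(abs_le.mp (hy a)).2]⟩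
    -- the segment between the two witnesses stays in `H` and crosses height `y a` at `a`
    obtain ⟨z, hz, hza⟩ := exists_mem_segment_apply_eq a hya
    obtain ⟨hzK, hzs, hzε⟩ := hH.segment_subset (mem_H hzmK hzms hzmε) (mem_H hzpK hzps hzpε) hz
    refine ⟨z, hzK, fun i hi => ?_, hzε⟩
    rcases Finset.mem_insert.mp hi with rfl | hi
    · exact hza
    · exact hzs i hi

theorem Convex.mem_of_forall_signs [Fintype ι] (hK : Convex ℝ K) (hy : ∀ i, |y i| ≤ 1)
    (hKε : ∀ ε : ι → ℝ, (∀ i, ε i = 1 ∨ ε i = -1) → ∃ z ∈ K, ∀ i, 1 ≤ ε i * z i) : y ∈ K := by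
  obtain ⟨z, hzK, hzy, -⟩ := hK.exists_eqOn_of_forall_signs hy hKε Finset.univ 1 (by simp)
  rwa [show z = y from funext fun i => hzy i (Finset.mem_univ i)] at hzK

end Orthants

theorem convex_setOf_sum_sq_le {n : Type*} [Fintype n] (r : ℝ) :
    Convex ℝ {w : n → ℝ | ∑ j, w j ^ 2 ≤ r} := by
  have hsum : (fun w : n → ℝ => ∑ j, w j ^ 2) = ∑ j, fun w : n → ℝ => w j ^ 2 := by
    ext w; simp [Finset.sum_apply]
  have hconvex : ConvexOn ℝ Set.univ fun w : n → ℝ => ∑ j, w j ^ 2 := by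
    rw [hsum]
    exact Finset.sum_induction _ (ConvexOn ℝ Set.univ) (fun _ _ => ConvexOn.add)
      (convexOn_const 0 convex_univ) fun j _ => (even_two.convexOn_pow (𝕜 := ℝ)).comp_linearMap
        (LinearMap.proj (R := ℝ) (φ := fun _ : n => ℝ) j)
  simpa using hconvex.convex_le r

section Gram

variable {m n : Type*} [Fintype m] [Fintype n]

theorem dotProduct_mul_transpose_mulVec {R : Type*} [CommSemiring R] (X : Matrix m n R)
    (c : m → R) : c ⬝ᵥ (X * Xᵀ) *ᵥ c = (Xᵀ *ᵥ c) ⬝ᵥ (Xᵀ *ᵥ c) := by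
  rw [← mulVec_mulVec, dotProduct_mulVec, mulVec_transpose]

theorem mulVec_surjective_of_forall_abs_le_one {X : Matrix m n ℝ}
    (hX : ∀ y : m → ℝ, (∀ i, |y i| ≤ 1) → y ∈ Set.range X.mulVec) :
    Function.Surjective X.mulVec := by
  intro v
  have hr : 0 < ‖v‖ + 1 := by positivity
  obtain ⟨w, hw⟩ := hX ((‖v‖ + 1)⁻¹ • v) fun i => by
    rw [Pi.smul_apply, smul_eq_mul, abs_mul, abs_inv, abs_of_pos hr, inv_mul_le_one₀ hr]
    linarith [norm_le_pi_norm v i, Real.norm_eq_abs (v i)]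
  refine ⟨(‖v‖ + 1) • w, ?_⟩
  rw [mulVec_smul, hw, smul_inv_smul₀ hr.ne']

variable [DecidableEq m]

theorem isUnit_mul_transpose_of_mulVec_surjective {K : Type*} [Field K] [LinearOrder K]
    [IsStrictOrderedRing K] {X : Matrix m n K} (hX : Function.Surjective X.mulVec) :
    IsUnit (X * Xᵀ) := by
  obtain ⟨W, hW⟩ := mulVec_surjective_iff_exists_right_inverse.mp hX
  rw [← mulVec_injective_iff_isUnit, ← coe_mulVecLin, ← LinearMap.ker_eq_bot,
    LinearMap.ker_eq_bot']
  intro c hc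
  have hXc : Xᵀ *ᵥ c = 0 := by
    rw [← dotProduct_self_eq_zero, ← dotProduct_mul_transpose_mulVec]
    simp [show (X * Xᵀ) *ᵥ c = 0 from hc]
  calc c = (X * W)ᵀ *ᵥ c := by simp [hW]
    _ = 0 := by rw [transpose_mul, ← mulVec_mulVec, hXc, mulVec_zero]

theorem mulVec_transpose_mulVec_inv_gram {X : Matrix m n ℝ} (hG : IsUnit (X * Xᵀ)) (y : m → ℝ) :
    X *ᵥ (Xᵀ *ᵥ ((X * Xᵀ)⁻¹ *ᵥ y)) = y := by
  rw [mulVec_mulVec, mulVec_mulVec,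
    mul_nonsing_inv _ ((isUnit_iff_isUnit_det _).mp hG), one_mulVec]

theorem dotProduct_self_transpose_mulVec_inv_gram {X : Matrix m n ℝ} (hG : IsUnit (X * Xᵀ))
    (y : m → ℝ) :
    (Xᵀ *ᵥ ((X * Xᵀ)⁻¹ *ᵥ y)) ⬝ᵥ (Xᵀ *ᵥ ((X * Xᵀ)⁻¹ *ᵥ y)) = y ⬝ᵥ (X * Xᵀ)⁻¹ *ᵥ y := by
  rw [← dotProduct_mul_transpose_mulVec, ← mulVec_mulVec, mulVec_transpose_mulVec_inv_gram hG,
    dotProduct_comm]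

theorem dotProduct_inv_gram_le_dotProduct_self {X : Matrix m n ℝ} (hG : IsUnit (X * Xᵀ))
    (w : n → ℝ) : (X *ᵥ w) ⬝ᵥ (X * Xᵀ)⁻¹ *ᵥ (X *ᵥ w) ≤ w ⬝ᵥ w := by
  set u := Xᵀ *ᵥ ((X * Xᵀ)⁻¹ *ᵥ (X *ᵥ w))
  have huw : u ⬝ᵥ w = (X *ᵥ w) ⬝ᵥ (X * Xᵀ)⁻¹ *ᵥ (X *ᵥ w) := by
    rw [dotProduct_comm, dotProduct_mulVec, vecMul_transpose]
  have huu := dotProduct_self_transpose_mulVec_inv_gram hG (X *ᵥ w)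
  have h0 : 0 ≤ (w - u) ⬝ᵥ (w - u) := Finset.sum_nonneg fun j _ => mul_self_nonneg _
  rw [sub_dotProduct, dotProduct_sub, dotProduct_sub, dotProduct_comm w u, huw, huu] at h0
  linarith

end Gram

theorem OneShatteredAtOrigin.exists_mulVec_eq {m d : ℕ} {X : Matrix (Fin m) (Fin d) ℝ}
    (hX : OneShatteredAtOrigin X) {y : Fin m → ℝ} (hy : ∀ i, |y i| ≤ 1) :
    ∃ w, ∑ j, w j ^ 2 ≤ 1 ∧ X *ᵥ w = y := by
  have hK : Convex ℝ (X.mulVec '' {w | ∑ j, w j ^ 2 ≤ 1}) :=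
    (convex_setOf_sum_sq_le 1).linear_image X.mulVecLin
  simpa using hK.mem_of_forall_signs hy fun ε hε => by simpa using hX ε hε

/-- The rows of `X` are `1`-shattered at the origin iff the Gram
matrix `X Xᵀ` is invertible and `yᵀ (X Xᵀ)⁻¹ y ≤ 1` for every sign vector `y`. -/
theorem one_shattered_iff_gram
    (m d : ℕ) (X : Matrix (Fin m) (Fin d) ℝ) :
    OneShatteredAtOrigin X ↔
      (IsUnit (X * Xᵀ) ∧ ∀ y : Fin m → ℝ, (∀ i, y i = 1 ∨ y i = -1) →
        y ⬝ᵥ (X * Xᵀ)⁻¹.mulVec y ≤ 1) := by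
  have sum_sq_eq (w : Fin d → ℝ) : ∑ j, w j ^ 2 = w ⬝ᵥ w := by simp [dotProduct, sq]
  constructor
  · intro hX
    have hG : IsUnit (X * Xᵀ) := isUnit_mul_transpose_of_mulVec_surjective <|
      mulVec_surjective_of_forall_abs_le_one fun y hy =>
        (hX.exists_mulVec_eq hy).imp fun _ => And.right
    refine ⟨hG, fun y hy => ?_⟩
    obtain ⟨w, hw, rfl⟩ := hX.exists_mulVec_eq (y := y) fun i => by
      rcases hy i with h | h <;> simp [h]
    calc _ ≤ w ⬝ᵥ w := dotProduct_inv_gram_le_dotProduct_self hG w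
      _ ≤ 1 := sum_sq_eq w ▸ hw
  · rintro ⟨hG, hle⟩ y hy
    refine ⟨Xᵀ *ᵥ ((X * Xᵀ)⁻¹ *ᵥ y), ?_, fun i => ?_⟩
    · rw [sum_sq_eq, dotProduct_self_transpose_mulVec_inv_gram hG]
      exact hle y hy
    · rw [mulVec_transpose_mulVec_inv_gram hG]
      rcases hy i with h | h <;> simp [h]
end

section
/- Let S = (x₁,…,x_m) be a sequence of points in ℝ^d and let X be the m×d matrix whose rows are x₁,…,x_m. If the smallest eigenvalue of the Gram matrix XXᵀ satisfies λ_m(XXᵀ) ≥ m, then S is 1-shattered at the origin. -/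
/-!
Since every eigenvalue of `G = X Xᵀ` is at least `m > 0`, we have `m • 1 ≤ G` in the Loewner
order and `G` is invertible. For a sign vector `y`, the interpolant `w = Xᵀ G⁻¹ y` satisfies
`X w = y`, and with `v = G⁻¹ y` its squared norm is `⟨v, G v⟩ = ⟨v, y⟩ ≥ m ‖v‖²`. Expanding
`0 ≤ ‖y - m v‖²` then gives `m ‖w‖² ≤ ‖y‖² = m`.
-/

open Matrix

open scoped MatrixOrder

namespace Matrix

lemma IsHermitian.algebraMap_le_iff_le_eigenvalues {𝕜 n : Type*} [RCLike 𝕜] [Fintype n]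
    [DecidableEq n] {A : Matrix n n 𝕜} (hA : A.IsHermitian) {c : ℝ} :
    algebraMap ℝ (Matrix n n 𝕜) c ≤ A ↔ ∀ i, c ≤ hA.eigenvalues i := by
  rw [algebraMap_le_iff_le_spectrum hA.isSelfAdjoint, hA.spectrum_real_eq_range_eigenvalues,
    Set.forall_mem_range]

variable {m n : Type*} [Fintype m] [DecidableEq m] [Fintype n]

lemma mul_dotProduct_self_le_of_algebraMap_le {A : Matrix m m ℝ} {c : ℝ}
    (h : algebraMap ℝ _ c ≤ A) (v : m → ℝ) : c * (v ⬝ᵥ v) ≤ v ⬝ᵥ A *ᵥ v := by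
  have hpsd := (le_iff.mp h).dotProduct_mulVec_nonneg v
  rw [Algebra.algebraMap_eq_smul_one] at hpsd
  simp only [star_trivial, sub_mulVec, dotProduct_sub, smul_mulVec, one_mulVec,
    dotProduct_smul, smul_eq_mul] at hpsd
  linarith

lemma isUnit_of_algebraMap_le {A : Matrix m m ℝ} {c : ℝ} (hc : 0 < c)
    (h : algebraMap ℝ _ c ≤ A) : IsUnit A := by
  have hpos : (algebraMap ℝ (Matrix m m ℝ) c).PosDef := by
    rw [Algebra.algebraMap_eq_smul_one]
    exact PosDef.one.smul hc
  simpa using (hpos.add_posSemidef (le_iff.mp h)).isUnit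

lemma exists_mulVec_eq_and_mul_dotProduct_self_le (X : Matrix m n ℝ) {c : ℝ} (hc : 0 < c)
    (h : algebraMap ℝ _ c ≤ X * Xᵀ) (y : m → ℝ) :
    ∃ w, X *ᵥ w = y ∧ c * (w ⬝ᵥ w) ≤ y ⬝ᵥ y := by
  obtain ⟨v, hv⟩ := mulVec_surjective_iff_isUnit.mpr (isUnit_of_algebraMap_le hc h) y
  refine ⟨Xᵀ *ᵥ v, by rw [mulVec_mulVec, hv], ?_⟩
  have hnorm : Xᵀ *ᵥ v ⬝ᵥ Xᵀ *ᵥ v = v ⬝ᵥ y := by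
    rw [dotProduct_mulVec, vecMul_transpose, mulVec_mulVec, hv, dotProduct_comm]
  have hquad : c * (v ⬝ᵥ v) ≤ v ⬝ᵥ y := hv ▸ mul_dotProduct_self_le_of_algebraMap_le h v
  have hsq : 0 ≤ (y - c • v) ⬝ᵥ (y - c • v) := dotProduct_self_star_nonneg _
  simp only [sub_dotProduct, dotProduct_sub, smul_dotProduct, dotProduct_smul, smul_eq_mul,
    dotProduct_comm y v] at hsq
  rw [hnorm]
  nlinarith

end Matrix

lemma dotProduct_self_eq_card_of_forall_eq_one_or_eq_neg_one {n : Type*} [Fintype n]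
    {y : n → ℝ} (hy : ∀ i, y i = 1 ∨ y i = -1) : y ⬝ᵥ y = Fintype.card n := by
  rw [dotProduct, Fintype.card_eq_sum_ones, Nat.cast_sum, Nat.cast_one]
  exact Finset.sum_congr rfl fun i _ => by rcases hy i with h | h <;> simp [h]

/-- If the smallest eigenvalue of the Gram matrix `X Xᵀ` is at
least `m` (i.e. every eigenvalue is at least `m`), then the rows of `X` are
`1`-shattered at the origin. -/
theorem one_shattered_of_smallest_eigenvalue
    (m d : ℕ) (hm : 0 < m) (X : Matrix (Fin m) (Fin d) ℝ)
    (hherm : (X * Xᵀ).IsHermitian)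
    (heig : ∀ i : Fin m, (m : ℝ) ≤ hherm.eigenvalues i) :
    OneShatteredAtOrigin X := by
  intro y hy
  have hmpos : (0 : ℝ) < m := Nat.cast_pos.mpr hm
  obtain ⟨w, hXw, hw⟩ := exists_mulVec_eq_and_mul_dotProduct_self_le X hmpos
    (hherm.algebraMap_le_iff_le_eigenvalues.mpr heig) y
  rw [dotProduct_self_eq_card_of_forall_eq_one_or_eq_neg_one hy, Fintype.card_fin] at hw
  refine ⟨w, ?_, fun i => ?_⟩
  · have hsum : ∑ j, w j ^ 2 = w ⬝ᵥ w := by simp only [dotProduct, sq]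
    rw [hsum]
    exact le_of_mul_le_mul_left (by rwa [mul_one]) hmpos
  · rw [hXw]
    rcases hy i with h | h <;> simp [h]
end

section
/- Let D be a probability distribution over ℝ^d × {±1}, let γ > 0, η ∈ [0,1], and let n be a positive integer. Let X_S denote the 2n × d random matrix whose rows are the points of an i.i.d. sample of size 2n from the marginal D_X. If P[λ_{2n}(X_S X_Sᵀ) ≥ 2n·γ²] ≥ η, then there exists a margin-error minimization algorithm A for samples of size n such that E_{S,S̃ ∼ D^n}[ℓ̂(A_γ(S, S̃_X), S̃)] ≥ η/2. -/
open MeasureTheory Matrix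

/-- Empirical `γ`-margin loss of `w` on a labeled sample `S` of size `n`. -/
noncomputable def empMarginLoss {n d : ℕ} (γ : ℝ) (w : Fin d → ℝ)
    (S : Fin n → (Fin d → ℝ) × ℝ) : ℝ :=
  ((Finset.univ.filter fun i : Fin n => (S i).2 * (∑ j, (S i).1 j * w j) ≤ γ).card : ℝ) / n

/-- `A` is a margin-error minimization algorithm at margin `γ`. -/
def IsMarginErrorMinimizer {n d : ℕ} (γ : ℝ)
    (A : (Fin n → (Fin d → ℝ) × ℝ) → (Fin n → Fin d → ℝ) → (Fin d → ℝ)) : Prop :=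
  ∀ S T, (∑ j, (A S T) j ^ 2 ≤ 1) ∧
    ∀ w : Fin d → ℝ, ∑ j, (w j) ^ 2 ≤ 1 → empMarginLoss γ (A S T) S ≤ empMarginLoss γ w S

/-!
If the Gram matrix `G = X Xᵀ` of the `2n` training and test points satisfies `G ≥ 2nγ²`, then
`X` has full row rank, so some `w = Xᵀ G⁻¹ v` takes the prescribed values `v = √2 γ y` on the
training points and `0` on the test points, and `‖w‖² = vᵀ G⁻¹ v ≤ ‖v‖² / (2nγ²) = 1`.
Such a `w` has zero margin error on the training sample, so a margin-error minimizer may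
output it, and it misclassifies every test point. Outside this event the algorithm returns a
minimizer chosen measurably from a countable dense subset of the unit ball (strict margins are
open conditions, so such a subset contains a minimizer); without measurability the Bochner
integral of the test error would be the junk value `0`.
-/

open scoped MatrixOrder in
theorem Matrix.IsHermitian.mul_dotProduct_le_dotProduct_mulVec {m : Type*} [Fintype m]
    [DecidableEq m] {G : Matrix m m ℝ} (hG : G.IsHermitian) {c : ℝ}
    (h : ∀ i, c ≤ hG.eigenvalues i) (u : m → ℝ) : c * (u ⬝ᵥ u) ≤ u ⬝ᵥ (G *ᵥ u) := by
  have hle : algebraMap ℝ (Matrix m m ℝ) c ≤ G := by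
    rw [algebraMap_le_iff_le_spectrum hG.isSelfAdjoint, hG.spectrum_real_eq_range_eigenvalues]
    rintro _ ⟨i, rfl⟩
    exact h i
  simpa only [star_trivial, Algebra.algebraMap_eq_smul_one, sub_mulVec, smul_mulVec, one_mulVec,
    dotProduct_sub, dotProduct_smul, smul_eq_mul, sub_nonneg]
    using (Matrix.le_iff.mp hle).dotProduct_mulVec_nonneg u

theorem Matrix.exists_mulVec_eq_of_le_dotProduct_mulVec {m k : Type*} [Fintype m]
    [DecidableEq m] [Fintype k] {X : Matrix m k ℝ} {c : ℝ} (hc : 0 < c)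
    (h : ∀ u, c * (u ⬝ᵥ u) ≤ u ⬝ᵥ ((X * Xᵀ) *ᵥ u)) (v : m → ℝ) :
    ∃ w, X *ᵥ w = v ∧ c * (w ⬝ᵥ w) ≤ v ⬝ᵥ v := by
  set G := X * Xᵀ
  have hG : G.PosDef := by
    refine .of_dotProduct_mulVec_pos (by simpa [G] using isHermitian_mul_conjTranspose_self X)
      fun u hu => ?_
    have hu : 0 < star u ⬝ᵥ u := dotProduct_star_self_pos_iff.mpr hu
    simp only [star_trivial] at hu ⊢
    nlinarith [h u]
  have hGinv : G * G⁻¹ = 1 := mul_nonsing_inv G ((isUnit_iff_isUnit_det G).mp hG.isUnit)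
  set u := G⁻¹ *ᵥ v
  have hGu : G *ᵥ u = v := by rw [mulVec_mulVec, hGinv, one_mulVec]
  refine ⟨Xᵀ *ᵥ u, by rw [mulVec_mulVec, hGu], ?_⟩
  have hww : (Xᵀ *ᵥ u) ⬝ᵥ (Xᵀ *ᵥ u) = u ⬝ᵥ v := by
    rw [dotProduct_mulVec, vecMul_transpose, mulVec_mulVec, hGu, dotProduct_comm]
  have hcs : (u ⬝ᵥ v) ^ 2 ≤ (u ⬝ᵥ u) * (v ⬝ᵥ v) := by
    simpa [dotProduct, sq] using Finset.sum_mul_sq_le_sq_mul_sq Finset.univ u v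
  have hray : c * (u ⬝ᵥ u) ≤ u ⬝ᵥ v := hGu ▸ h u
  have huv : 0 ≤ u ⬝ᵥ v := hww ▸ dotProduct_self_star_nonneg _
  have hvv : 0 ≤ v ⬝ᵥ v := by simpa using dotProduct_star_self_nonneg v
  rw [hww]
  -- `c ‖u‖² ≤ ⟪u, v⟫` and Cauchy–Schwarz give `c ⟪u, v⟫² ≤ ⟪u, v⟫ ‖v‖²`.
  rcases huv.eq_or_lt with h0 | hpos
  · rw [← h0, mul_zero]; exact hvv
  · nlinarith

theorem exists_measurable_argmin {α : Type*} [MeasurableSpace α] (f : ℕ → α → ℕ)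
    (hf : ∀ k, Measurable (f k)) : ∃ κ : α → ℕ, Measurable κ ∧ ∀ a m, f (κ a) a ≤ f m a := by
  classical
  have hex : ∀ a, ∃ k, ∀ m, f k a ≤ f m a :=
    fun a => ⟨Function.argmin (f · a), fun m => Function.argmin_le (f · a) m⟩
  refine ⟨fun a => Nat.find (hex a), measurable_find hex fun k => ?_,
    fun a => Nat.find_spec (hex a)⟩
  simpa only [Set.ofPred_forall] using MeasurableSet.iInter fun m => measurableSet_le (hf k) (hf m)

theorem le_integral_of_ofReal_le_measure {α : Type*} [MeasurableSpace α] {μ : Measure α}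
    [IsFiniteMeasure μ] {f : α → ℝ} (hf : Integrable f μ) (h0 : 0 ≤ᵐ[μ] f) {η : ℝ}
    (hη : ENNReal.ofReal η ≤ μ {x | 1 ≤ f x}) : η ≤ ∫ x, f x ∂μ :=
  calc η ≤ μ.real {x | 1 ≤ f x} := (ENNReal.ofReal_le_iff_le_toReal (measure_ne_top _ _)).mp hη
    _ ≤ ∫ x, f x ∂μ := by simpa using mul_meas_ge_le_integral_of_nonneg h0 hf 1

section Concatenation

variable {n : ℕ} {α : Type*}

def finSumFinEquivTwoMul (n : ℕ) : Fin n ⊕ Fin n ≃ Fin (2 * n) :=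
  finSumFinEquiv.trans (finCongr (two_mul n).symm)

def appendSample (a b : Fin n → α) : Fin (2 * n) → α :=
  fun k => Sum.elim a b ((finSumFinEquivTwoMul n).symm k)

@[simp]
theorem appendSample_inl (a b : Fin n → α) (i : Fin n) :
    appendSample a b (finSumFinEquivTwoMul n (.inl i)) = a i := by
  simp [appendSample]

@[simp]
theorem appendSample_inr (a b : Fin n → α) (i : Fin n) :
    appendSample a b (finSumFinEquivTwoMul n (.inr i)) = b i := by
  simp [appendSample]

theorem dotProduct_appendSample (a b a' b' : Fin n → ℝ) :
    appendSample a b ⬝ᵥ appendSample a' b' = a ⬝ᵥ a' + b ⬝ᵥ b' := by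
  simp only [dotProduct, ← (finSumFinEquivTwoMul n).sum_comp, Fintype.sum_sum_type,
    appendSample_inl, appendSample_inr]

variable [MeasurableSpace α]

theorem appendSample_eq_piCongrLeft_comp :
    (fun p : (Fin n → α) × (Fin n → α) => appendSample p.1 p.2) =
      MeasurableEquiv.piCongrLeft (fun _ => α) (finSumFinEquivTwoMul n) ∘
        (MeasurableEquiv.sumPiEquivProdPi fun _ => α).symm := by
  ext p k
  obtain ⟨s, rfl⟩ := (finSumFinEquivTwoMul n).surjective k
  simp only [Function.comp_apply, MeasurableEquiv.piCongrLeft_apply_apply,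
    MeasurableEquiv.coe_sumPiEquivProdPi_symm]
  cases s <;> simp

theorem measurable_appendSample :
    Measurable fun p : (Fin n → α) × (Fin n → α) => appendSample p.1 p.2 := by
  rw [appendSample_eq_piCongrLeft_comp]
  exact MeasurableEquiv.measurable _ |>.comp (MeasurableEquiv.measurable _)

theorem measurePreserving_appendSample (ν : Measure α) [SigmaFinite ν] :
    MeasurePreserving (fun p : (Fin n → α) × (Fin n → α) => appendSample p.1 p.2)
      ((Measure.pi fun _ => ν).prod (Measure.pi fun _ => ν)) (Measure.pi fun _ => ν) := by
  rw [appendSample_eq_piCongrLeft_comp]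
  exact (measurePreserving_piCongrLeft (fun _ => ν) _).comp
    (measurePreserving_sumPiEquivProdPi_symm fun _ => ν)

end Concatenation

/-- The Rayleigh-quotient form of `λ_min(X Xᵀ) ≥ c`. -/
def gramBoundedBelow {ι κ : Type*} [Fintype ι] [Fintype κ] (c : ℝ) : Set (ι → κ → ℝ) :=
  {x | ∀ u, c * (u ⬝ᵥ u) ≤ u ⬝ᵥ ((of x * (of x)ᵀ) *ᵥ u)}

theorem isClosed_gramBoundedBelow {ι κ : Type*} [Fintype ι] [Fintype κ] (c : ℝ) :
    IsClosed (gramBoundedBelow (ι := ι) (κ := κ) c) := by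
  simp only [gramBoundedBelow, Set.ofPred_forall, dotProduct, mulVec, mul_apply, transpose_apply,
    of_apply]
  exact isClosed_iInter fun u => isClosed_le (by fun_prop) (by fun_prop)

theorem setOf_eigenvalues_subset_gramBoundedBelow {ι κ : Type*} [Fintype ι] [DecidableEq ι]
    [Fintype κ] (c : ℝ) :
    {x : ι → κ → ℝ | ∀ h : (of x * (of x)ᵀ).IsHermitian, ∀ i, c ≤ h.eigenvalues i} ⊆
      gramBoundedBelow c := fun x hx =>
  (isHermitian_mul_conjTranspose_self (of x)).mul_dotProduct_le_dotProduct_mulVec (hx _)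

variable {n d : ℕ}

def margin (w : Fin d → ℝ) (z : (Fin d → ℝ) × ℝ) : ℝ := z.2 * ∑ j, z.1 j * w j

noncomputable def marginErrors (γ : ℝ) (w : Fin d → ℝ) (S : Fin n → (Fin d → ℝ) × ℝ) :
    Finset (Fin n) :=
  Finset.univ.filter fun i => margin w (S i) ≤ γ

theorem empMarginLoss_eq_card_div (γ : ℝ) (w : Fin d → ℝ) (S : Fin n → (Fin d → ℝ) × ℝ) :
    empMarginLoss γ w S = (marginErrors γ w S).card / n := rfl

theorem empMarginLoss_nonneg (γ : ℝ) (w : Fin d → ℝ) (S : Fin n → (Fin d → ℝ) × ℝ) :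
    0 ≤ empMarginLoss γ w S := by
  rw [empMarginLoss_eq_card_div]; positivity

theorem empMarginLoss_le_one (γ : ℝ) (w : Fin d → ℝ) (S : Fin n → (Fin d → ℝ) × ℝ) :
    empMarginLoss γ w S ≤ 1 := by
  rw [empMarginLoss_eq_card_div]
  exact div_le_one_of_le₀ (by simpa using Finset.card_le_univ (marginErrors γ w S)) (by positivity)

theorem empMarginLoss_eq_zero {γ : ℝ} {w : Fin d → ℝ} {S : Fin n → (Fin d → ℝ) × ℝ}
    (h : ∀ i, γ < margin w (S i)) : empMarginLoss γ w S = 0 := by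
  rw [empMarginLoss_eq_card_div, marginErrors, Finset.filter_false_of_mem fun i _ => (h i).not_ge]
  simp

theorem empMarginLoss_zero_eq_one (hn : 0 < n) {w : Fin d → ℝ} {S : Fin n → (Fin d → ℝ) × ℝ}
    (h : ∀ i, ∑ j, (S i).1 j * w j = 0) : empMarginLoss 0 w S = 1 := by
  rw [empMarginLoss_eq_card_div, marginErrors,
    Finset.filter_true_of_mem fun i _ => by simp [margin, h i]]
  simp [hn.ne']

theorem continuous_margin :
    Continuous fun p : (Fin d → ℝ) × ((Fin d → ℝ) × ℝ) => margin p.1 p.2 := by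
  unfold margin; fun_prop

theorem measurable_card_marginErrors {α : Type*} [MeasurableSpace α] (γ : ℝ)
    {w : α → Fin d → ℝ} {S : α → Fin n → (Fin d → ℝ) × ℝ} (hw : Measurable w)
    (hS : Measurable S) : Measurable fun a => (marginErrors γ (w a) (S a)).card := by
  simp only [marginErrors, Finset.card_filter]
  refine Finset.measurable_sum _ fun i _ => Measurable.ite ?_ measurable_const measurable_const
  exact measurableSet_le
    (continuous_margin.measurable.comp (hw.prodMk ((measurable_pi_apply i).comp hS)))
    measurable_const

def unitBall (d : ℕ) : Set (Fin d → ℝ) := {w | ∑ j, w j ^ 2 ≤ 1}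

instance : Nonempty (unitBall d) := ⟨⟨0, by simp [unitBall]⟩⟩

theorem exists_denseSeq_marginErrors_subset (γ : ℝ) (S : Fin n → (Fin d → ℝ) × ℝ)
    {w : Fin d → ℝ} (hw : w ∈ unitBall d) :
    ∃ k, marginErrors γ (TopologicalSpace.denseSeq (unitBall d) k) S ⊆ marginErrors γ w S := by
  set W := ⋂ i ∈ {i | γ < margin w (S i)}, {v : Fin d → ℝ | γ < margin v (S i)}
  have hW : IsOpen W := (Set.toFinite _).isOpen_biInter fun i _ =>
    isOpen_lt continuous_const (continuous_margin.comp (Continuous.prodMk_left (S i)))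
  obtain ⟨k, hk⟩ := (TopologicalSpace.denseRange_denseSeq (unitBall d)).exists_mem_open
    (hW.preimage continuous_subtype_val) ⟨⟨w, hw⟩, Set.mem_iInter₂.mpr fun _ hi => hi⟩
  refine ⟨k, fun i => ?_⟩
  simp only [marginErrors, Finset.mem_filter, Finset.mem_univ, true_and]
  contrapose!
  exact Set.mem_iInter₂.mp hk i

theorem exists_measurable_marginErrors_minimizer (γ : ℝ) :
    ∃ q : (Fin n → (Fin d → ℝ) × ℝ) → Fin d → ℝ, Measurable q ∧ ∀ S, q S ∈ unitBall d ∧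
      ∀ w ∈ unitBall d, (marginErrors γ (q S) S).card ≤ (marginErrors γ w S).card := by
  set u : ℕ → Fin d → ℝ := fun k => TopologicalSpace.denseSeq (unitBall d) k
  obtain ⟨κ, hκ, hmin⟩ := exists_measurable_argmin (fun k S => (marginErrors γ (u k) S).card)
    fun k => measurable_card_marginErrors γ measurable_const measurable_id
  refine ⟨fun S => u (κ S), (measurable_from_nat (f := u)).comp hκ, fun S =>
    ⟨(TopologicalSpace.denseSeq (unitBall d) (κ S)).2, fun w hw => ?_⟩⟩
  obtain ⟨k, hk⟩ := exists_denseSeq_marginErrors_subset γ S hw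
  exact (hmin S k).trans (Finset.card_le_card hk)

theorem exists_interpolating_separator {γ : ℝ} (hγ : 0 < γ) (hn : 0 < n)
    {S : Fin n → (Fin d → ℝ) × ℝ} {T : Fin n → Fin d → ℝ}
    (hS : ∀ i, (S i).2 = 1 ∨ (S i).2 = -1)
    (hx : appendSample (fun i => (S i).1) T ∈ gramBoundedBelow (2 * n * γ ^ 2)) :
    ∃ w ∈ unitBall d, (∀ i, γ < margin w (S i)) ∧ ∀ i, ∑ j, T i j * w j = 0 := by
  have hy (i : Fin n) : (S i).2 * (S i).2 = 1 := by rcases hS i with h | h <;> simp [h]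
  set v := appendSample (fun i => √2 * γ * (S i).2) 0 with hv
  have hvv : v ⬝ᵥ v = 2 * n * γ ^ 2 := by
    have hsq (i : Fin n) : √2 * γ * (S i).2 * (√2 * γ * (S i).2) = 2 * γ ^ 2 := by
      linear_combination (2 * γ ^ 2) * hy i + γ ^ 2 * (S i).2 ^ 2 * Real.sq_sqrt zero_le_two
    rw [hv, dotProduct_appendSample, dotProduct_zero, add_zero, dotProduct]
    simp only [hsq, Finset.sum_const, Finset.card_univ, Fintype.card_fin, nsmul_eq_mul]
    ring
  obtain ⟨w, hXw, hw⟩ := exists_mulVec_eq_of_le_dotProduct_mulVec (by positivity) hx v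
  have hrow (k : Fin (2 * n)) : ∑ j, appendSample (fun i => (S i).1) T k j * w j = v k :=
    congrFun hXw k
  refine ⟨w, ?_, fun i => ?_, fun i => by simpa [v] using hrow (finSumFinEquivTwoMul n (.inr i))⟩
  · have : w ⬝ᵥ w ≤ 1 := by
      rw [hvv] at hw
      exact le_of_mul_le_mul_left (by linarith) (by positivity : (0 : ℝ) < 2 * n * γ ^ 2)
    simpa [unitBall, dotProduct, sq] using this
  · have hmargin : margin w (S i) = √2 * γ := by
      have := hrow (finSumFinEquivTwoMul n (.inl i))
      simp only [appendSample_inl, v] at this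
      rw [margin, this]
      linear_combination √2 * γ * hy i
    rw [hmargin]
    exact lt_mul_of_one_lt_left hγ Real.one_lt_sqrt_two

theorem isMarginErrorMinimizer_ite {γ : ℝ}
    {P : (Fin n → (Fin d → ℝ) × ℝ) → (Fin n → Fin d → ℝ) → Prop} [∀ S T, Decidable (P S T)]
    {w : (Fin n → (Fin d → ℝ) × ℝ) → (Fin n → Fin d → ℝ) → Fin d → ℝ}
    {q : (Fin n → (Fin d → ℝ) × ℝ) → Fin d → ℝ}
    (hw : ∀ S T, P S T → w S T ∈ unitBall d ∧ ∀ i, γ < margin (w S T) (S i))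
    (hq : ∀ S, q S ∈ unitBall d ∧
      ∀ v ∈ unitBall d, (marginErrors γ (q S) S).card ≤ (marginErrors γ v S).card) :
    IsMarginErrorMinimizer γ fun S T => if P S T then w S T else q S := by
  intro S T
  by_cases h : P S T
  · simp only [if_pos h]
    refine ⟨(hw S T h).1, fun v _ => ?_⟩
    rw [empMarginLoss_eq_zero (hw S T h).2]
    exact empMarginLoss_nonneg γ v S
  · simp only [if_neg h]
    refine ⟨(hq S).1, fun v hv => ?_⟩
    rw [empMarginLoss_eq_card_div, empMarginLoss_eq_card_div]
    exact div_le_div_of_nonneg_right (Nat.cast_le.mpr ((hq S).2 v hv)) n.cast_nonneg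

theorem exists_marginErrorMinimizer_misclassifying_on (hn : 0 < n) (γ : ℝ)
    {P : (Fin n → (Fin d → ℝ) × ℝ) → (Fin n → Fin d → ℝ) → Prop}
    (hP : MeasurableSet {p : (Fin n → (Fin d → ℝ) × ℝ) × (Fin n → (Fin d → ℝ) × ℝ) |
      P p.1 (fun i => (p.2 i).1)})
    (hsep : ∀ S T, P S T →
      ∃ w ∈ unitBall d, (∀ i, γ < margin w (S i)) ∧ ∀ i, ∑ j, T i j * w j = 0) :
    ∃ A, IsMarginErrorMinimizer γ A ∧
      Measurable (fun p : (Fin n → (Fin d → ℝ) × ℝ) × (Fin n → (Fin d → ℝ) × ℝ) =>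
        empMarginLoss 0 (A p.1 (fun i => (p.2 i).1)) p.2) ∧
      ∀ S S', P S (fun i => (S' i).1) → empMarginLoss 0 (A S (fun i => (S' i).1)) S' = 1 := by
  classical
  obtain ⟨q, hq_meas, hq⟩ := exists_measurable_marginErrors_minimizer (n := n) (d := d) γ
  choose! w hw using hsep
  set A := fun S T => if P S T then w S T else q S with hA
  have hmis : ∀ S S', P S (fun i => (S' i).1) → empMarginLoss 0 (w S (fun i => (S' i).1)) S' = 1 :=
    fun S S' h => empMarginLoss_zero_eq_one hn (hw _ _ h).2.2
  refine ⟨A, isMarginErrorMinimizer_ite (fun S T h => ⟨(hw S T h).1, (hw S T h).2.1⟩) hq, ?_,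
    fun S S' h => by simpa only [hA, if_pos h] using hmis S S' h⟩
  have hq_loss : Measurable fun p : (Fin n → (Fin d → ℝ) × ℝ) × (Fin n → (Fin d → ℝ) × ℝ) =>
      empMarginLoss 0 (q p.1) p.2 :=
    (measurable_from_nat (f := fun k : ℕ => (k : ℝ) / n)).comp
      (measurable_card_marginErrors 0 (hq_meas.comp measurable_fst) measurable_snd)
  have hsplit : (fun p : (Fin n → (Fin d → ℝ) × ℝ) × (Fin n → (Fin d → ℝ) × ℝ) =>
      empMarginLoss 0 (A p.1 (fun i => (p.2 i).1)) p.2) = fun p =>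
      if P p.1 (fun i => (p.2 i).1) then 1 else empMarginLoss 0 (q p.1) p.2 := by
    funext p
    by_cases h : P p.1 (fun i => (p.2 i).1)
    · simp only [hA, if_pos h, hmis p.1 p.2 h]
    · simp only [hA, if_neg h]
  rw [hsplit]
  exact Measurable.ite hP measurable_const hq_loss

theorem measurePreserving_appendFeatures {β : Type*} [MeasurableSpace β]
    (D : Measure ((Fin d → ℝ) × β)) [IsProbabilityMeasure D] :
    MeasurePreserving
      (fun p : (Fin n → (Fin d → ℝ) × β) × (Fin n → (Fin d → ℝ) × β) =>
        appendSample (fun i => (p.1 i).1) (fun i => (p.2 i).1))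
      ((Measure.pi fun _ => D).prod (Measure.pi fun _ => D))
      (Measure.pi fun _ => D.map Prod.fst) := by
  have : IsProbabilityMeasure (D.map Prod.fst) :=
    Measure.isProbabilityMeasure_map measurable_fst.aemeasurable
  have hfeat : MeasurePreserving (fun S : Fin n → (Fin d → ℝ) × β => fun i => (S i).1)
      (Measure.pi fun _ => D) (Measure.pi fun _ => D.map Prod.fst) :=
    measurePreserving_pi _ _ fun _ => ⟨measurable_fst, rfl⟩
  exact (measurePreserving_appendSample _).comp (hfeat.prod hfeat)

def GramBoundedBelowEvent (c : ℝ) (S : Fin n → (Fin d → ℝ) × ℝ) (T : Fin n → Fin d → ℝ) :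
    Prop :=
  (∀ i, (S i).2 = 1 ∨ (S i).2 = -1) ∧ appendSample (fun i => (S i).1) T ∈ gramBoundedBelow c

theorem measurableSet_gramBoundedBelowEvent (c : ℝ) :
    MeasurableSet {p : (Fin n → (Fin d → ℝ) × ℝ) × (Fin n → (Fin d → ℝ) × ℝ) |
      GramBoundedBelowEvent c p.1 (fun i => (p.2 i).1)} := by
  have hfeat : Measurable fun p : (Fin n → (Fin d → ℝ) × ℝ) × (Fin n → (Fin d → ℝ) × ℝ) =>
      ((fun i => (p.1 i).1, fun i => (p.2 i).1) : (Fin n → Fin d → ℝ) × (Fin n → Fin d → ℝ)) := by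
    fun_prop
  refine .inter ?_ ((isClosed_gramBoundedBelow c).measurableSet.preimage
    (measurable_appendSample.comp hfeat))
  exact measurableSet_setOfPred.mpr <| .forall fun i => .or
    (measurableSet_setOfPred.mp (measurableSet_eq_fun (by fun_prop) measurable_const))
    (measurableSet_setOfPred.mp (measurableSet_eq_fun (by fun_prop) measurable_const))

theorem le_measure_gramBoundedBelowEvent (D : Measure ((Fin d → ℝ) × ℝ))
    [IsProbabilityMeasure D] (hlabels : ∀ᵐ z ∂D, z.2 = 1 ∨ z.2 = -1) (c : ℝ) :
    Measure.pi (fun _ : Fin (2 * n) => D.map Prod.fst) (gramBoundedBelow c) ≤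
      (Measure.pi fun _ : Fin n => D).prod (Measure.pi fun _ => D)
        {p | GramBoundedBelowEvent c p.1 (fun i => (p.2 i).1)} := by
  rw [← (measurePreserving_appendFeatures D).measure_preimage
    (isClosed_gramBoundedBelow c).measurableSet.nullMeasurableSet]
  have hlab : ∀ᵐ S ∂Measure.pi fun _ : Fin n => D, ∀ i, (S i).2 = 1 ∨ (S i).2 = -1 :=
    Filter.eventually_all.2 fun i =>
      (Measure.tendsto_eval_ae_ae (μ := fun _ => D) (i := i)).eventually hlabels
  refine measure_mono_ae ?_
  filter_upwards [Measure.quasiMeasurePreserving_fst.ae hlab] with p hp hx using ⟨hp, hx⟩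

/-- Let `X_S` be the `2n × d` matrix of an i.i.d. sample of size
`2n` from the marginal `D_X`.  If with probability at least `η` all eigenvalues of
the Gram matrix `X_S X_Sᵀ` are at least `2nγ²` (i.e. `λ_{2n}(X_S X_Sᵀ) ≥ 2nγ²`),
then some margin-error minimization algorithm has expected test misclassification
error at least `η/2`. -/
theorem eigenvalue_implies_not_learned
    (d n : ℕ) (hn : 0 < n) (γ η : ℝ) (hγ : 0 < γ) (hη : η ∈ Set.Icc (0 : ℝ) 1)
    (D : Measure ((Fin d → ℝ) × ℝ)) [IsProbabilityMeasure D]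
    (hlabels : ∀ᵐ p ∂D, p.2 = 1 ∨ p.2 = -1)
    (heig : ENNReal.ofReal η ≤
      (Measure.pi fun _ : Fin (2 * n) => D.map Prod.fst)
        {x : Fin (2 * n) → Fin d → ℝ |
          ∀ h : ((Matrix.of x) * (Matrix.of x)ᵀ).IsHermitian,
            ∀ i, (2 * n : ℝ) * γ ^ 2 ≤ h.eigenvalues i}) :
    ∃ A : (Fin n → (Fin d → ℝ) × ℝ) → (Fin n → Fin d → ℝ) → (Fin d → ℝ),
      IsMarginErrorMinimizer γ A ∧
      η / 2 ≤ ∫ p : (Fin n → (Fin d → ℝ) × ℝ) × (Fin n → (Fin d → ℝ) × ℝ),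
          empMarginLoss 0 (A p.1 (fun i => (p.2 i).1)) p.2
          ∂((Measure.pi fun _ : Fin n => D).prod (Measure.pi fun _ : Fin n => D)) := by
  obtain ⟨A, hA, hA_meas, hA_mis⟩ := exists_marginErrorMinimizer_misclassifying_on hn γ
    (measurableSet_gramBoundedBelowEvent _) fun S T h =>
      exists_interpolating_separator hγ hn h.1 h.2
  refine ⟨A, hA, (half_le_self hη.1).trans (le_integral_of_ofReal_le_measure ?_ ?_ ?_)⟩
  · exact .of_mem_Icc 0 1 hA_meas.aemeasurable
      (ae_of_all _ fun p => ⟨empMarginLoss_nonneg _ _ _, empMarginLoss_le_one _ _ _⟩)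
  · exact ae_of_all _ fun p => empMarginLoss_nonneg _ _ _
  · calc ENNReal.ofReal η ≤ _ := heig
      _ ≤ _ := measure_mono (setOf_eigenvalues_subset_gramBoundedBelow _)
      _ ≤ _ := le_measure_gramBoundedBelowEvent D hlabels _
      _ ≤ _ := measure_mono fun p hp => (hA_mis p.1 p.2 hp).ge
end

section
/- Let X be an m×d real matrix such that XXᵀ is invertible, and let Y be an m×n real matrix with XXᵀ = YYᵀ. Let r ∈ ℝ^m and suppose there exists w̃ ∈ ℝ^n with Y w̃ = r. Then there exists w ∈ ℝ^d such that X w = r and ‖w‖₂ = ‖P w̃‖₂, where P = Yᵀ(YYᵀ)⁻¹Y is the orthogonal projection onto the row space of Y. -/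
/-!
The minimum-norm solution of `X w = r` is `w = Xᵀ (X Xᵀ)⁻¹ r`, and `P w̃ = Yᵀ (Y Yᵀ)⁻¹ r`.
For any `M` with `M Mᵀ` invertible, `‖Mᵀ (M Mᵀ)⁻¹ r‖² = rᵀ (M Mᵀ)⁻¹ r` depends on `M` only
through the Gram matrix `M Mᵀ`, which is the same for `X` and `Y`.
-/

open Matrix

namespace Matrix

variable {R m n : Type*} [CommRing R] [Fintype m] [DecidableEq m] [Fintype n]

theorem mul_mulVec_transpose_mul_nonsing_inv (M : Matrix m n R) (hM : IsUnit (M * Mᵀ))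
    (r : m → R) : M *ᵥ ((Mᵀ * (M * Mᵀ)⁻¹) *ᵥ r) = r := by
  rw [mulVec_mulVec, ← Matrix.mul_assoc,
    mul_nonsing_inv _ ((isUnit_iff_isUnit_det _).mp hM), one_mulVec]

theorem transpose_mul_nonsing_inv_mulVec_dotProduct_self (M : Matrix m n R)
    (hM : IsUnit (M * Mᵀ)) (r : m → R) :
    (Mᵀ * (M * Mᵀ)⁻¹) *ᵥ r ⬝ᵥ (Mᵀ * (M * Mᵀ)⁻¹) *ᵥ r = r ⬝ᵥ (M * Mᵀ)⁻¹ *ᵥ r := by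
  set A := M * Mᵀ with hA
  have hAinv_symm : A⁻¹ᵀ = A⁻¹ := by
    rw [transpose_nonsing_inv, hA, transpose_mul, transpose_transpose]
  have hgram : (Mᵀ * A⁻¹)ᵀ * (Mᵀ * A⁻¹) = A⁻¹ := by
    calc (Mᵀ * A⁻¹)ᵀ * (Mᵀ * A⁻¹) = A⁻¹ * A * A⁻¹ := by
          rw [transpose_mul, transpose_transpose, hAinv_symm, hA]; simp only [Matrix.mul_assoc]
      _ = A⁻¹ := by rw [nonsing_inv_mul _ ((isUnit_iff_isUnit_det _).mp hM), Matrix.one_mul]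
  rw [dotProduct_mulVec, ← mulVec_transpose, mulVec_mulVec, hgram, dotProduct_comm]

end Matrix

/-- If `X Xᵀ` is invertible, `X Xᵀ = Y Yᵀ`, and `Y w̃ = r`, then
there is `w` with `X w = r` and `‖w‖ = ‖P w̃‖`, where `P = Yᵀ (Y Yᵀ)⁻¹ Y` is the
orthogonal projection onto the row space of `Y`. -/
theorem exists_separator_same_norm
    (m d n : ℕ)
    (X : Matrix (Fin m) (Fin d) ℝ) (Y : Matrix (Fin m) (Fin n) ℝ)
    (hinv : IsUnit (X * Xᵀ))
    (hXY : X * Xᵀ = Y * Yᵀ)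
    (r : Fin m → ℝ) (wt : Fin n → ℝ) (hwt : Y.mulVec wt = r) :
    ∃ w : Fin d → ℝ, X.mulVec w = r ∧
      Real.sqrt (∑ j, (w j) ^ 2) =
        Real.sqrt (∑ j, ((Yᵀ * (Y * Yᵀ)⁻¹ * Y).mulVec wt j) ^ 2) := by
  have hinvY : IsUnit (Y * Yᵀ) := hXY ▸ hinv
  have hPwt : (Yᵀ * (Y * Yᵀ)⁻¹ * Y) *ᵥ wt = (Yᵀ * (Y * Yᵀ)⁻¹) *ᵥ r := by
    rw [← mulVec_mulVec, hwt]
  refine ⟨(Xᵀ * (X * Xᵀ)⁻¹) *ᵥ r, mul_mulVec_transpose_mul_nonsing_inv X hinv r, ?_⟩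
  simp only [hPwt, sq, ← dotProduct.eq_1]
  rw [transpose_mul_nonsing_inv_mulVec_dotProduct_self X hinv,
    transpose_mul_nonsing_inv_mulVec_dotProduct_self Y hinvY, hXY]
end

section
/- Let T₁,…,T_d be independent real random variables such that all moments E[T_iⁿ] (n ∈ ℕ) exist and are non-negative for every i. Let λ₁,…,λ_d ∈ [0,1] with Σ_{i=1}^d λ_i = L > 0. Then for every t ≥ 0, E[exp(t·Σ_{i=1}^d λ_i T_i)] ≤ max_{i ∈ [d]} (E[exp(3t·T_i)])^{⌈L⌉}. -/
/-!
Cut the indices, in order, at the integer levels of the partial sums of the `λᵢ`: this gives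
`⌈L⌉` groups, each of total weight at most `2`. By independence the moment generating function
factorises over the groups. Inside a group, `t λᵢ Tᵢ = (λᵢ / 3) (3 t Tᵢ)` with `∑ λᵢ / 3 ≤ 1`, so
convexity of `exp` bounds the group's factor by a convex combination of `1` and the
`E[exp (3 t Tᵢ)]`; each of these is at least `1` since `E[Tᵢ] ≥ 0`.
-/

open MeasureTheory ProbabilityTheory Finset
open scoped ENNReal

lemma mem_Icc_of_min_floor_eq {x : ℝ} {m k : ℕ} (hx₀ : 0 ≤ x) (hxm : x ≤ m)
    (hk : min ⌊x⌋₊ (m - 1) = k) : x ∈ Set.Icc (k : ℝ) (k + 1) := by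
  rcases le_total ⌊x⌋₊ (m - 1) with h | h
  · rw [min_eq_left h] at hk
    subst hk
    exact ⟨Nat.floor_le hx₀, (Nat.lt_floor_add_one x).le⟩
  · rw [min_eq_right h] at hk
    subst hk
    refine ⟨(Nat.cast_le.2 h).trans (Nat.floor_le hx₀), hxm.trans ?_⟩
    norm_cast
    omega

section Partition

variable {ι : Type*} [LinearOrder ι] [LocallyFiniteOrderBot ι] {w : ι → ℝ}

/-- The window has length one; the second unit is the weight of the last index in it. -/
lemma sum_le_two_of_sum_Iio_mem_Icc (hw : ∀ i, w i ∈ Set.Icc (0 : ℝ) 1) {A : Finset ι} {a : ℝ}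
    (hA : ∀ i ∈ A, ∑ j ∈ Iio i, w j ∈ Set.Icc a (a + 1)) :
    ∑ i ∈ A, w i ≤ 2 := by
  rcases A.eq_empty_or_nonempty with rfl | hne
  · simp
  set i₀ := A.min' hne
  set i₁ := A.max' hne
  have hi₀₁ : i₀ ≤ i₁ := A.min'_le _ (A.max'_mem hne)
  have hsub : A ⊆ Iic i₁ \ Iio i₀ := fun i hi => by
    simpa using ⟨A.le_max' i hi, A.min'_le i hi⟩
  calc ∑ i ∈ A, w i ≤ ∑ i ∈ Iic i₁ \ Iio i₀, w i :=
        sum_le_sum_of_subset_of_nonneg hsub fun i _ _ => (hw i).1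
    _ = ∑ j ∈ Iio i₁, w j + w i₁ - ∑ j ∈ Iio i₀, w j := by
        rw [sum_sdiff_eq_sub (Iio_subset_Iic_self.trans (Iic_subset_Iic.2 hi₀₁)), Iic_eq_cons_Iio,
          sum_cons, add_comm]
    _ ≤ 2 := by
        linarith [(hA _ (A.max'_mem hne)).2, (hA _ (A.min'_mem hne)).1, (hw i₁).2]

/-- Index `i` goes to group `⌊∑_{j < i} w j⌋₊`, capped at `m - 1`. -/
theorem exists_partition_sum_le_two [Fintype ι] (hw : ∀ i, w i ∈ Set.Icc (0 : ℝ) 1) {m : ℕ}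
    (hm : 0 < m) (hsum : ∑ i, w i ≤ m) :
    ∃ g : ι → Fin m, ∀ k, ∑ i with g i = k, w i ≤ 2 := by
  have hS₀ : ∀ i, 0 ≤ ∑ j ∈ Iio i, w j := fun i => sum_nonneg fun j _ => (hw j).1
  have hSm : ∀ i, ∑ j ∈ Iio i, w j ≤ m := fun i =>
    (sum_le_sum_of_subset_of_nonneg (subset_univ _) fun j _ _ => (hw j).1).trans hsum
  refine ⟨fun i => ⟨min ⌊∑ j ∈ Iio i, w j⌋₊ (m - 1), by omega⟩, fun k => ?_⟩
  refine sum_le_two_of_sum_Iio_mem_Icc (a := k) hw fun i hi => ?_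
  exact mem_Icc_of_min_floor_eq (hS₀ i) (hSm i) (congrArg Fin.val (mem_filter.1 hi).2)

end Partition

lemma Real.exp_sum_mul_le {ι : Type*} {s : Finset ι} {w : ι → ℝ} (hw₀ : ∀ i ∈ s, 0 ≤ w i)
    (hw₁ : ∑ i ∈ s, w i ≤ 1) (x : ι → ℝ) :
    exp (∑ i ∈ s, w i * x i) ≤ (1 - ∑ i ∈ s, w i) + ∑ i ∈ s, w i * exp (x i) := by
  simpa [smul_eq_mul] using convexOn_exp.map_add_sum_le (q := 0) (v := 1 - ∑ i ∈ s, w i) hw₀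
    (by ring) (fun i _ => Set.mem_univ (x i)) (by linarith) (Set.mem_univ _)

section Lintegral

variable {Ω : Type*} [MeasurableSpace Ω] {μ : Measure Ω}

lemma ofReal_integral_le_lintegral_ofReal {f : Ω → ℝ} (hf : Integrable f μ) :
    ENNReal.ofReal (∫ ω, f ω ∂μ) ≤ ∫⁻ ω, ENNReal.ofReal (f ω) ∂μ := by
  rw [integral_eq_lintegral_pos_part_sub_lintegral_neg_part hf]
  exact ENNReal.ofReal_le_of_le_toReal (sub_le_self _ ENNReal.toReal_nonneg)

lemma one_le_lintegral_exp_mul [IsProbabilityMeasure μ] {X : Ω → ℝ} (hX : Integrable X μ)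
    (hX₀ : 0 ≤ ∫ ω, X ω ∂μ) {c : ℝ} (hc : 0 ≤ c) :
    1 ≤ ∫⁻ ω, ENNReal.ofReal (Real.exp (c * X ω)) ∂μ := by
  have hint : Integrable (fun ω => 1 + c * X ω) μ := (integrable_const 1).add (hX.const_mul c)
  calc (1 : ℝ≥0∞) ≤ ENNReal.ofReal (∫ ω, 1 + c * X ω ∂μ) := by
        rw [integral_add (integrable_const 1) (hX.const_mul c), integral_const_mul]
        simpa using mul_nonneg hc hX₀
    _ ≤ ∫⁻ ω, ENNReal.ofReal (1 + c * X ω) ∂μ := ofReal_integral_le_lintegral_ofReal hint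
    _ ≤ ∫⁻ ω, ENNReal.ofReal (Real.exp (c * X ω)) ∂μ := lintegral_mono fun ω =>
        ENNReal.ofReal_le_ofReal (by linarith [Real.add_one_le_exp (c * X ω)])

/-- Convexity of `exp` puts the missing mass `1 - ∑ w` at `0`, where `E[exp 0] = 1 ≤ C`. -/
lemma lintegral_exp_sum_mul_le [IsProbabilityMeasure μ] {ι : Type*} {s : Finset ι}
    {w : ι → ℝ} {X : ι → Ω → ℝ} {C : ℝ≥0∞} (hX : ∀ i ∈ s, AEMeasurable (X i) μ)
    (hw₀ : ∀ i ∈ s, 0 ≤ w i) (hw₁ : ∑ i ∈ s, w i ≤ 1) (hC : 1 ≤ C)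
    (hXC : ∀ i ∈ s, ∫⁻ ω, ENNReal.ofReal (Real.exp (X i ω)) ∂μ ≤ C) :
    ∫⁻ ω, ENNReal.ofReal (Real.exp (∑ i ∈ s, w i * X i ω)) ∂μ ≤ C := by
  set W := ∑ i ∈ s, w i
  have hpt : ∀ ω, ENNReal.ofReal (Real.exp (∑ i ∈ s, w i * X i ω)) ≤ ENNReal.ofReal (1 - W) +
      ∑ i ∈ s, ENNReal.ofReal (w i) * ENNReal.ofReal (Real.exp (X i ω)) := fun ω => by
    calc _ ≤ ENNReal.ofReal ((1 - W) + ∑ i ∈ s, w i * Real.exp (X i ω)) :=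
          ENNReal.ofReal_le_ofReal (Real.exp_sum_mul_le hw₀ hw₁ _)
      _ ≤ ENNReal.ofReal (1 - W) + ENNReal.ofReal (∑ i ∈ s, w i * Real.exp (X i ω)) :=
          ENNReal.ofReal_add_le
      _ = _ := by
          rw [ENNReal.ofReal_sum_of_nonneg fun i hi => mul_nonneg (hw₀ i hi) (Real.exp_nonneg _)]
          congr 1
          exact sum_congr rfl fun i hi => ENNReal.ofReal_mul (hw₀ i hi)
  calc ∫⁻ ω, ENNReal.ofReal (Real.exp (∑ i ∈ s, w i * X i ω)) ∂μ
      ≤ ∫⁻ ω, ENNReal.ofReal (1 - W) +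
          ∑ i ∈ s, ENNReal.ofReal (w i) * ENNReal.ofReal (Real.exp (X i ω)) ∂μ :=
        lintegral_mono hpt
    _ = ENNReal.ofReal (1 - W) +
          ∑ i ∈ s, ENNReal.ofReal (w i) * ∫⁻ ω, ENNReal.ofReal (Real.exp (X i ω)) ∂μ := by
        rw [lintegral_add_left measurable_const, lintegral_const, measure_univ, mul_one,
          lintegral_finsetSum' _ fun i hi => ((hX i hi).exp.ennreal_ofReal).const_mul _]
        simp_rw [lintegral_const_mul' _ _ ENNReal.ofReal_ne_top]
    _ ≤ ENNReal.ofReal (1 - W) * C + ∑ i ∈ s, ENNReal.ofReal (w i) * C := by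
        gcongr with i hi
        · exact le_mul_of_one_le_right' hC
        · exact hXC i hi
    _ = C := by
        rw [← sum_mul, ← ENNReal.ofReal_sum_of_nonneg hw₀, ← add_mul,
          ← ENNReal.ofReal_add (by linarith) (sum_nonneg hw₀), sub_add_cancel,
          ENNReal.ofReal_one, one_mul]

end Lintegral

namespace ProbabilityTheory

variable {Ω ι : Type*} [MeasurableSpace Ω] {μ : Measure Ω} {X : ι → Ω → ℝ}

lemma iIndepFun.lintegral_exp_sum_union [DecidableEq ι] (hX : iIndepFun X μ)
    (hXm : ∀ i, Measurable (X i)) {s₁ s₂ : Finset ι} (h : Disjoint s₁ s₂) :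
    ∫⁻ ω, ENNReal.ofReal (Real.exp (∑ i ∈ s₁ ∪ s₂, X i ω)) ∂μ =
      (∫⁻ ω, ENNReal.ofReal (Real.exp (∑ i ∈ s₁, X i ω)) ∂μ) *
        ∫⁻ ω, ENNReal.ofReal (Real.exp (∑ i ∈ s₂, X i ω)) ∂μ := by
  have hφ : ∀ s : Finset ι, Measurable fun v : s → ℝ => ENNReal.ofReal (Real.exp (∑ i, v i)) :=
    fun s => by fun_prop
  have hcomp : ∀ s : Finset ι, ((fun v : s → ℝ => ENNReal.ofReal (Real.exp (∑ i, v i))) ∘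
      fun ω (i : s) => X i ω) = fun ω => ENNReal.ofReal (Real.exp (∑ i ∈ s, X i ω)) :=
    fun s => funext fun ω => by simp only [Function.comp_apply, sum_coe_sort s (X · ω)]
  have hindep := (hX.indepFun_finset s₁ s₂ h hXm).comp (hφ s₁) (hφ s₂)
  rw [hcomp, hcomp] at hindep
  simp_rw [sum_union h, Real.exp_add, ENNReal.ofReal_mul (Real.exp_nonneg _)]
  exact lintegral_mul_eq_lintegral_mul_lintegral_of_indepFun'' (by fun_prop) (by fun_prop) hindep

lemma iIndepFun.lintegral_exp_sum_fiberwise {κ : Type*} [DecidableEq κ] (hX : iIndepFun X μ)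
    (hXm : ∀ i, Measurable (X i)) (s : Finset ι) (t : Finset κ) (g : ι → κ)
    (hg : ∀ i ∈ s, g i ∈ t) :
    ∫⁻ ω, ENNReal.ofReal (Real.exp (∑ i ∈ s, X i ω)) ∂μ =
      ∏ k ∈ t, ∫⁻ ω, ENNReal.ofReal (Real.exp (∑ i ∈ s with g i = k, X i ω)) ∂μ := by
  classical
  have := hX.isProbabilityMeasure
  suffices key : ∀ t : Finset κ,
      ∫⁻ ω, ENNReal.ofReal (Real.exp (∑ i ∈ s with g i ∈ t, X i ω)) ∂μ =
        ∏ k ∈ t, ∫⁻ ω, ENNReal.ofReal (Real.exp (∑ i ∈ s with g i = k, X i ω)) ∂μ by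
    rw [← key, filter_true_of_mem hg]
  intro t
  induction t using Finset.induction_on with
  | empty => simp
  | insert k t hk ih =>
    have hsplit : {i ∈ s | g i ∈ insert k t} = {i ∈ s | g i = k} ∪ {i ∈ s | g i ∈ t} := by
      simp only [mem_insert, filter_or]
    have hdisj : Disjoint {i ∈ s | g i = k} {i ∈ s | g i ∈ t} :=
      disjoint_filter.2 fun i _ hik hit => hk (hik ▸ hit)
    rw [hsplit, hX.lintegral_exp_sum_union hXm hdisj, ih, prod_insert hk]

end ProbabilityTheory

theorem mgf_partition_bound_general
    (d : ℕ)
    (Ω : Type*) [MeasurableSpace Ω] (μ : Measure Ω) [IsProbabilityMeasure μ]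
    (T : Fin d → Ω → ℝ)
    (hmeas : ∀ i, Measurable (T i))
    (hindep : iIndepFun T μ)
    (hint : ∀ i (n : ℕ), Integrable (fun ω => (T i ω) ^ n) μ)
    (hmom : ∀ i (n : ℕ), 0 ≤ ∫ ω, (T i ω) ^ n ∂μ)
    (lam : Fin d → ℝ) (hlam : ∀ i, lam i ∈ Set.Icc (0 : ℝ) 1)
    (L : ℝ) (hL : L = ∑ i, lam i) (hLpos : 0 < L)
    (t : ℝ) (ht : 0 ≤ t) :
    ∫⁻ ω, ENNReal.ofReal (Real.exp (t * ∑ i, lam i * T i ω)) ∂μ ≤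
      ⨆ i : Fin d,
        (∫⁻ ω, ENNReal.ofReal (Real.exp (3 * t * T i ω)) ∂μ) ^ (⌈L⌉₊) := by
  set M : Fin d → ℝ≥0∞ := fun i => ∫⁻ ω, ENNReal.ofReal (Real.exp (3 * t * T i ω)) ∂μ
  have : Nonempty (Fin d) := by
    obtain ⟨i, -, -⟩ := exists_ne_zero_of_sum_ne_zero (hL ▸ hLpos.ne')
    exact ⟨i⟩
  obtain ⟨i₀, hi₀⟩ := Finite.exists_max M
  have hM : 1 ≤ M i₀ :=
    one_le_lintegral_exp_mul (by simpa using hint i₀ 1) (by simpa using hmom i₀ 1) (by positivity)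
  obtain ⟨g, hg⟩ := exists_partition_sum_le_two hlam (Nat.ceil_pos.2 hLpos) (hL ▸ Nat.le_ceil L)
  have hgroup : ∀ k, ∫⁻ ω, ENNReal.ofReal (Real.exp (∑ i with g i = k, t * lam i * T i ω)) ∂μ
      ≤ M i₀ := fun k => by
    have h := lintegral_exp_sum_mul_le (s := {i | g i = k}) (w := fun i => lam i / 3)
      (X := fun i ω => 3 * t * T i ω)
      (fun i _ => ((hmeas i).const_mul _).aemeasurable) (fun i _ => by linarith [(hlam i).1])
      (by rw [← sum_div]; linarith [hg k]) hM fun i _ => hi₀ i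
    convert h using 5 with ω
    exact sum_congr rfl fun i _ => by ring
  calc ∫⁻ ω, ENNReal.ofReal (Real.exp (t * ∑ i, lam i * T i ω)) ∂μ
      = ∏ k, ∫⁻ ω, ENNReal.ofReal (Real.exp (∑ i with g i = k, t * lam i * T i ω)) ∂μ := by
        simp_rw [mul_sum, ← mul_assoc]
        exact (hindep.comp (fun i x => t * lam i * x) fun i => measurable_const.mul measurable_id
          ).lintegral_exp_sum_fiberwise (fun i => (hmeas i).const_mul _) univ univ g
          fun _ _ => mem_univ _
    _ ≤ ∏ _k : Fin ⌈L⌉₊, M i₀ := prod_le_prod' fun k _ => hgroup k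
    _ = M i₀ ^ ⌈L⌉₊ := by simp
    _ ≤ ⨆ i, M i ^ ⌈L⌉₊ := le_iSup (fun i => M i ^ ⌈L⌉₊) i₀

/-- Let `T₁,…,T_d` be independent real random variables whose
moments `E[Tᵢⁿ]` all exist and are non-negative, and let `λᵢ ∈ [0,1]` with
`Σ λᵢ = L > 0`.  Then for every `t ≥ 0`,
`E[exp(t Σ λᵢ Tᵢ)] ≤ maxᵢ (E[exp(3t Tᵢ)])^⌈L⌉`
(expectations of exponentials taken in `[0,∞]`). -/
theorem mgf_partition_bound
    (d : ℕ) (hd : 0 < d)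
    (Ω : Type*) [MeasurableSpace Ω] (μ : Measure Ω) [IsProbabilityMeasure μ]
    (T : Fin d → Ω → ℝ)
    (hmeas : ∀ i, Measurable (T i))
    (hindep : iIndepFun T μ)
    (hint : ∀ i (n : ℕ), Integrable (fun ω => (T i ω) ^ n) μ)
    (hmom : ∀ i (n : ℕ), 0 ≤ ∫ ω, (T i ω) ^ n ∂μ)
    (lam : Fin d → ℝ) (hlam : ∀ i, lam i ∈ Set.Icc (0 : ℝ) 1)
    (L : ℝ) (hL : L = ∑ i, lam i) (hLpos : 0 < L)
    (t : ℝ) (ht : 0 ≤ t) :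
    ∫⁻ ω, ENNReal.ofReal (Real.exp (t * ∑ i, lam i * T i ω)) ∂μ ≤
      ⨆ i : Fin d,
        (∫⁻ ω, ENNReal.ofReal (Real.exp (3 * t * T i ω)) ∂μ) ^ (⌈L⌉₊) :=
  mgf_partition_bound_general d Ω μ T hmeas hindep hint hmom lam hlam L hL hLpos t ht
end

section
/- Let m ≤ d be positive integers, let Y be a d×m random matrix whose entries Y_{ij} are independent real random variables, each sub-Gaussian with moment B, and let Σ be a d×d diagonal positive semidefinite matrix with Σ ≤ I_d. Then for every t ≥ 0 and every ε ∈ (0,1), P[‖√Σ · Y‖ ≥ t] ≤ N_m(ε)·exp(trace(Σ)/2 − t²(1−ε)²/(4B²)), where ‖·‖ is the operator (spectral) norm and N_m(ε) is the minimal cardinality of an ε-net of the unit sphere of ℝ^m. -/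
/-!
For a fixed unit vector `c`, `‖√Σ Y c‖² = ∑ᵢ λᵢ Zᵢ²` with `Zᵢ = ∑ⱼ cⱼ Yᵢⱼ`. The rows of `Y` are
independent, so the `Zᵢ` are independent and, being unit combinations of independent
sub-Gaussian variables, sub-Gaussian with the same moment `B`. Linearising `exp (a Z²)` as a
Gaussian integral of `exp (s Z)` gives `E exp (λ Z² / 4B²) ≤ (1 - λ/2)^(-1/2) ≤ exp (λ/2)`, and a
Chernoff bound turns the product of these into the tail `exp (tr Σ / 2 - r / 4B²)`. Finally, if
`c` maximises `‖√Σ Y c‖` over an `ε`-net of the sphere then `(1 - ε) ‖√Σ Y‖ ≤ ‖√Σ Y c‖`, and a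
union bound over the net gives the factor `N_m(ε)`.
-/

open MeasureTheory ProbabilityTheory Matrix

/-- `N_m(ε)`: the minimal cardinality of an `ε`-net of the unit sphere of `ℝ^m`. -/
noncomputable def sphereCoveringNumber (m : ℕ) (ε : ℝ) : ℕ :=
  sInf {n : ℕ | ∃ C : Finset (EuclideanSpace ℝ (Fin m)), C.card = n ∧
    (∀ c ∈ C, ‖c‖ = 1) ∧
    ∀ x : EuclideanSpace ℝ (Fin m), ‖x‖ = 1 → ∃ c ∈ C, dist x c ≤ ε}

open Real
open scoped ENNReal

lemma ENNReal.ofReal_exp_sum {ι : Type*} (s : Finset ι) (f : ι → ℝ) :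
    ENNReal.ofReal (exp (∑ i ∈ s, f i)) = ∏ i ∈ s, ENNReal.ofReal (exp (f i)) := by
  rw [exp_sum, ENNReal.ofReal_prod_of_nonneg fun i _ ↦ (exp_pos _).le]

lemma inv_sqrt_one_sub_half_le_exp_half {x : ℝ} (hx₀ : 0 ≤ x) (hx₁ : x ≤ 1) :
    (√(1 - x / 2))⁻¹ ≤ exp (x / 2) := by
  have hpos : 0 < 1 - x / 2 := by linarith
  have h : (1 - x / 2)⁻¹ ≤ exp x := by
    rw [inv_le_iff_one_le_mul₀' hpos]
    nlinarith [add_one_le_exp x]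
  calc (√(1 - x / 2))⁻¹ = √((1 - x / 2)⁻¹) := (sqrt_inv _).symm
    _ ≤ √(exp x) := sqrt_le_sqrt h
    _ = exp (x / 2) := by rw [← exp_half]

lemma exists_finset_card_eq_sphereCoveringNumber (m : ℕ) {ε : ℝ} (hε : 0 < ε) :
    ∃ C : Finset (EuclideanSpace ℝ (Fin m)), C.card = sphereCoveringNumber m ε ∧
      (∀ c ∈ C, ‖c‖ = 1) ∧ ∀ x : EuclideanSpace ℝ (Fin m), ‖x‖ = 1 → ∃ c ∈ C, dist x c ≤ ε := by
  obtain ⟨S, hS, hSfin, hcover⟩ :=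
    (isCompact_sphere (0 : EuclideanSpace ℝ (Fin m)) 1).finite_cover_balls hε
  refine Nat.sInf_mem (s := {n | ∃ C : Finset (EuclideanSpace ℝ (Fin m)), C.card = n ∧
      (∀ c ∈ C, ‖c‖ = 1) ∧ ∀ x : EuclideanSpace ℝ (Fin m), ‖x‖ = 1 → ∃ c ∈ C, dist x c ≤ ε})
    ⟨_, hSfin.toFinset, rfl, fun c hc ↦ ?_, fun x hx ↦ ?_⟩
  · simpa using hS (hSfin.mem_toFinset.1 hc)
  · obtain ⟨c, hc, hxc⟩ := Set.mem_iUnion₂.1 (hcover (mem_sphere_zero_iff_norm.2 hx))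
    exact ⟨c, hSfin.mem_toFinset.2 hc, (Metric.mem_ball.1 hxc).le⟩

lemma ContinuousLinearMap.exists_mem_net_mul_opNorm_le {E F : Type*} [NormedAddCommGroup E]
    [NormedSpace ℝ E] [Nontrivial E] [SeminormedAddCommGroup F] [NormedSpace ℝ F]
    (A : E →L[ℝ] F) {C : Finset E} {ε : ℝ}
    (hnet : ∀ x : E, ‖x‖ = 1 → ∃ c ∈ C, dist x c ≤ ε) :
    ∃ c ∈ C, (1 - ε) * ‖A‖ ≤ ‖A c‖ := by
  obtain ⟨x₀, hx₀⟩ := exists_norm_eq E zero_le_one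
  obtain ⟨c₀, hc₀, hε⟩ := hnet x₀ hx₀
  obtain ⟨c, hc, hmax⟩ := C.exists_max_image (fun c ↦ ‖A c‖) ⟨c₀, hc₀⟩
  refine ⟨c, hc, ?_⟩
  have hA : ‖A‖ ≤ ε * ‖A‖ + ‖A c‖ := by
    refine A.opNorm_le_of_unit_norm (by positivity [dist_nonneg.trans hε]) fun x hx ↦ ?_
    obtain ⟨c', hc', hxc'⟩ := hnet x hx
    calc ‖A x‖ ≤ ‖A (x - c')‖ + ‖A c'‖ := by
          simpa using norm_add_le (A (x - c')) (A c')
      _ ≤ ‖A‖ * ‖x - c'‖ + ‖A c‖ := add_le_add (A.le_opNorm _) (hmax c' hc')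
      _ ≤ ε * ‖A‖ + ‖A c‖ := by
          rw [← dist_eq_norm, mul_comm]
          gcongr
  linarith

lemma norm_toEuclideanLin_sqrt_mul_sq {ι κ : Type*} [Fintype ι] [Fintype κ] [DecidableEq κ]
    {lam : ι → ℝ} (hlam : ∀ i, 0 ≤ lam i) (Y : ι → κ → ℝ) (c : EuclideanSpace ℝ κ) :
    ‖toEuclideanLin (of fun i j ↦ √(lam i) * Y i j) c‖ ^ 2 =
      ∑ i, lam i * (∑ j, c j * Y i j) ^ 2 := by
  rw [EuclideanSpace.norm_sq_eq]
  refine Finset.sum_congr rfl fun i _ ↦ ?_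
  simp only [toLpLin_apply, PiLp.toLp_apply, mulVec, dotProduct, of_apply, norm_eq_abs,
    sq_abs, mul_assoc, ← Finset.mul_sum, mul_pow, sq_sqrt (hlam i)]
  simp_rw [mul_comm (Y i _)]

lemma lintegral_ofReal_exp_neg_mul_sq {c : ℝ} (hc : 0 < c) :
    ∫⁻ s : ℝ, ENNReal.ofReal (exp (-c * s ^ 2)) = ENNReal.ofReal (√(π / c)) := by
  rw [← ofReal_integral_eq_lintegral_ofReal (integrable_exp_neg_mul_sq hc)
    (.of_forall fun s ↦ (exp_pos _).le), integral_gaussian]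

lemma lintegral_ofReal_exp_mul_sub_mul_sq {b : ℝ} (hb : 0 < b) (x : ℝ) :
    ∫⁻ s : ℝ, ENNReal.ofReal (exp (s * x - b * s ^ 2)) =
      ENNReal.ofReal (√(π / b)) * ENNReal.ofReal (exp (x ^ 2 / (4 * b))) := by
  have hsquare : ∀ s : ℝ, s * x - b * s ^ 2 = -b * (s - x / (2 * b)) ^ 2 + x ^ 2 / (4 * b) := by
    intro s
    field_simp
    ring
  simp_rw [hsquare, exp_add, ENNReal.ofReal_mul (exp_pos _).le]
  rw [lintegral_mul_const' _ _ ENNReal.ofReal_ne_top,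
    lintegral_sub_right_eq_self (fun s ↦ ENNReal.ofReal (exp (-b * s ^ 2))),
    lintegral_ofReal_exp_neg_mul_sq hb]

namespace ProbabilityTheory

variable {Ω : Type*} {mΩ : MeasurableSpace Ω} {μ : Measure Ω}

lemma iIndepFun.curry {ι κ X : Type*} {mX : MeasurableSpace X}
    {Y : ι → κ → Ω → X} (hY : ∀ i j, Measurable (Y i j))
    (h : iIndepFun (fun p : ι × κ ↦ Y p.1 p.2) μ) :
    iIndepFun (fun i ω j ↦ Y i j ω) μ := by
  have := h.isProbabilityMeasure
  have hrow : ∀ i, μ.map (fun ω j ↦ Y i j ω) = Measure.infinitePi fun j ↦ μ.map (Y i j) :=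
    fun i ↦ (h.precomp (Prod.mk_right_injective i)).map_fun_eq_infinitePi_map (hY i)
  have hjoint : μ.map (fun ω (p : ι × κ) ↦ Y p.1 p.2 ω) =
      Measure.infinitePi fun p : ι × κ ↦ μ.map (Y p.1 p.2) :=
    h.map_fun_eq_infinitePi_map fun p ↦ hY p.1 p.2
  rw [iIndepFun_iff_map_fun_eq_infinitePi_map fun i ↦ measurable_pi_lambda _ (hY i)]
  calc μ.map (fun ω i j ↦ Y i j ω)
      = (μ.map fun ω (p : ι × κ) ↦ Y p.1 p.2 ω).map (MeasurableEquiv.curry ι κ X) := by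
        rw [Measure.map_map (MeasurableEquiv.measurable _) (by fun_prop)]
        rfl
    _ = Measure.infinitePi fun i ↦ Measure.infinitePi fun j ↦ μ.map (Y i j) := by
        have _ i j := Measure.isProbabilityMeasure_map (μ := μ) (hY i j).aemeasurable
        rw [hjoint]
        exact Measure.infinitePi_map_curry fun i j ↦ μ.map (Y i j)
    _ = _ := by simp_rw [hrow]

lemma measure_ge_le_exp_mul_lintegral_exp {W : Ω → ℝ} (hW : Measurable W) {θ : ℝ} (hθ : 0 ≤ θ)
    (r : ℝ) :
    μ {ω | r ≤ W ω} ≤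
      ENNReal.ofReal (exp (-(θ * r))) * ∫⁻ ω, ENNReal.ofReal (exp (θ * W ω)) ∂μ := calc
  _ ≤ μ {ω | ENNReal.ofReal (exp (θ * r)) ≤ ENNReal.ofReal (exp (θ * W ω))} :=
      measure_mono fun ω hω ↦ ENNReal.ofReal_le_ofReal (exp_le_exp.2 (by gcongr; exact hω))
  _ ≤ (∫⁻ ω, ENNReal.ofReal (exp (θ * W ω)) ∂μ) / ENNReal.ofReal (exp (θ * r)) :=
      meas_ge_le_lintegral_div (by fun_prop) (by simp [exp_pos]) ENNReal.ofReal_ne_top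
  _ = _ := by
      rw [ENNReal.div_eq_inv_mul, ← ENNReal.ofReal_inv_of_pos (exp_pos _), ← exp_neg]

/-- Sub-Gaussianity with moment `B`, with the moment generating function taken as a lintegral,
so that, unlike `HasSubgaussianMGF`, no integrability assumption is built in. -/
def HasSubgaussianMoment (B : ℝ) (X : Ω → ℝ) (μ : Measure Ω) : Prop :=
  ∀ s : ℝ, ∫⁻ ω, ENNReal.ofReal (exp (s * X ω)) ∂μ ≤ ENNReal.ofReal (exp (B ^ 2 * s ^ 2 / 2))

lemma HasSubgaussianMoment.sum_mul {ι : Type*} [Fintype ι] {B : ℝ} {X : ι → Ω → ℝ}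
    (hX : ∀ j, Measurable (X j)) (hindep : iIndepFun X μ)
    (hsub : ∀ j, HasSubgaussianMoment B (X j) μ) (c : EuclideanSpace ℝ ι) :
    HasSubgaussianMoment (B * ‖c‖) (fun ω ↦ ∑ j, c j * X j ω) μ := by
  intro s
  have hexp : iIndepFun (fun j ω ↦ ENNReal.ofReal (exp (s * c j * X j ω))) μ :=
    hindep.comp (fun j x ↦ ENNReal.ofReal (exp (s * c j * x))) fun j ↦ by fun_prop
  calc ∫⁻ ω, ENNReal.ofReal (exp (s * ∑ j, c j * X j ω)) ∂μ
      = ∫⁻ ω, ∏ j, ENNReal.ofReal (exp (s * c j * X j ω)) ∂μ := by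
        simp_rw [Finset.mul_sum, ← mul_assoc, ENNReal.ofReal_exp_sum]
    _ = ∏ j, ∫⁻ ω, ENNReal.ofReal (exp (s * c j * X j ω)) ∂μ :=
        lintegral_prod_eq_prod_lintegral_of_indepFun _ _ hexp fun j ↦ by fun_prop
    _ ≤ ∏ j, ENNReal.ofReal (exp (B ^ 2 * (s * c j) ^ 2 / 2)) :=
        Finset.prod_le_prod' fun j _ ↦ hsub j (s * c j)
    _ = ENNReal.ofReal (exp ((B * ‖c‖) ^ 2 * s ^ 2 / 2)) := by
        rw [← ENNReal.ofReal_exp_sum, mul_pow, EuclideanSpace.norm_sq_eq, Finset.mul_sum,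
          Finset.sum_mul, Finset.sum_div]
        simp only [Real.norm_eq_abs, sq_abs]
        congr 2
        exact Finset.sum_congr rfl fun j _ ↦ by ring

lemma HasSubgaussianMoment.lintegral_exp_mul_sq_le [SFinite μ] {B : ℝ} {X : Ω → ℝ}
    (hX : Measurable X) (h : HasSubgaussianMoment B X μ) {a : ℝ} (ha : 0 ≤ a)
    (haB : 2 * a * B ^ 2 < 1) :
    ∫⁻ ω, ENNReal.ofReal (exp (a * X ω ^ 2)) ∂μ ≤ ENNReal.ofReal (√(1 - 2 * a * B ^ 2))⁻¹ := by
  rcases ha.eq_or_lt with rfl | ha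
  · simpa using h 0
  -- Gaussian linearisation: for `b = 1 / (4a)`, `exp (a x²)` is a constant times
  -- `∫ exp (s x - b s²) ds`.
  set b := 1 / (4 * a) with hb_def
  have hb : 0 < b := by positivity
  have hbB : 0 < b - B ^ 2 / 2 := by
    rw [hb_def]
    field_simp
    nlinarith
  have hmeas : Measurable (Function.uncurry fun ω (s : ℝ) ↦
      ENNReal.ofReal (exp (s * X ω - b * s ^ 2))) := by
    fun_prop
  have hmgf : ∀ s : ℝ, ∫⁻ ω, ENNReal.ofReal (exp (s * X ω - b * s ^ 2)) ∂μ ≤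
      ENNReal.ofReal (exp (-(b - B ^ 2 / 2) * s ^ 2)) := fun s ↦ calc
    _ = (∫⁻ ω, ENNReal.ofReal (exp (s * X ω)) ∂μ) * ENNReal.ofReal (exp (-(b * s ^ 2))) := by
        rw [← lintegral_mul_const' _ _ ENNReal.ofReal_ne_top]
        simp_rw [← ENNReal.ofReal_mul (exp_pos _).le, ← exp_add, sub_eq_add_neg]
    _ ≤ ENNReal.ofReal (exp (B ^ 2 * s ^ 2 / 2)) * ENNReal.ofReal (exp (-(b * s ^ 2))) := by
        gcongr
        exact h s
    _ = _ := by
        rw [← ENNReal.ofReal_mul (exp_pos _).le, ← exp_add]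
        ring_nf
  have hkey : ENNReal.ofReal (√(π / b)) * ∫⁻ ω, ENNReal.ofReal (exp (a * X ω ^ 2)) ∂μ ≤
      ENNReal.ofReal (√(π / (b - B ^ 2 / 2))) := calc
    _ = ∫⁻ ω, (∫⁻ s : ℝ, ENNReal.ofReal (exp (s * X ω - b * s ^ 2))) ∂μ := by
        simp_rw [lintegral_ofReal_exp_mul_sub_mul_sq hb, hb_def]
        rw [lintegral_const_mul' _ _ ENNReal.ofReal_ne_top]
        field_simp
    _ = ∫⁻ s : ℝ, ∫⁻ ω, ENNReal.ofReal (exp (s * X ω - b * s ^ 2)) ∂μ :=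
        lintegral_lintegral_swap hmeas.aemeasurable
    _ ≤ ∫⁻ s : ℝ, ENNReal.ofReal (exp (-(b - B ^ 2 / 2) * s ^ 2)) := lintegral_mono hmgf
    _ = _ := lintegral_ofReal_exp_neg_mul_sq hbB
  have hratio : √(π / (b - B ^ 2 / 2)) / √(π / b) = (√(1 - 2 * a * B ^ 2))⁻¹ := by
    rw [← sqrt_div' _ (by positivity), ← sqrt_inv]
    congr 1
    rw [hb_def]
    field_simp
    rw [div_eq_div_iff (by linarith) (by linarith)]
    ring
  rw [← hratio, ENNReal.ofReal_div_of_pos (by positivity), ENNReal.le_div_iff_mul_le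
    (by simp [pi_pos, hb]) (by simp), mul_comm]
  exact hkey

lemma lintegral_exp_sum_mul_sq_le {ι : Type*} [Fintype ι] {B : ℝ} (hB : B ≠ 0)
    {Z : ι → Ω → ℝ} (hZ : ∀ i, Measurable (Z i)) (hindep : iIndepFun Z μ)
    (hsub : ∀ i, HasSubgaussianMoment B (Z i) μ) {lam : ι → ℝ}
    (hlam : ∀ i, lam i ∈ Set.Icc (0 : ℝ) 1) :
    ∫⁻ ω, ENNReal.ofReal (exp ((4 * B ^ 2)⁻¹ * ∑ i, lam i * Z i ω ^ 2)) ∂μ ≤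
      ENNReal.ofReal (exp ((∑ i, lam i) / 2)) := by
  have := hindep.isProbabilityMeasure
  have hfactor : ∀ i, ∫⁻ ω, ENNReal.ofReal (exp (lam i / (4 * B ^ 2) * Z i ω ^ 2)) ∂μ ≤
      ENNReal.ofReal (exp (lam i / 2)) := fun i ↦ by
    obtain ⟨hlam₀, hlam₁⟩ := hlam i
    have hmoment : 2 * (lam i / (4 * B ^ 2)) * B ^ 2 = lam i / 2 := by
      field_simp
      ring
    calc _ ≤ ENNReal.ofReal (√(1 - 2 * (lam i / (4 * B ^ 2)) * B ^ 2))⁻¹ :=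
          (hsub i).lintegral_exp_mul_sq_le (hZ i) (by positivity) (by rw [hmoment]; linarith)
      _ ≤ _ := by
          rw [hmoment]
          exact ENNReal.ofReal_le_ofReal (inv_sqrt_one_sub_half_le_exp_half hlam₀ hlam₁)
  have hsq : iIndepFun (fun i ω ↦ ENNReal.ofReal (exp (lam i / (4 * B ^ 2) * Z i ω ^ 2))) μ :=
    hindep.comp (fun i x ↦ ENNReal.ofReal (exp (lam i / (4 * B ^ 2) * x ^ 2))) fun i ↦ by fun_prop
  calc _ = ∫⁻ ω, ∏ i, ENNReal.ofReal (exp (lam i / (4 * B ^ 2) * Z i ω ^ 2)) ∂μ := by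
        simp_rw [Finset.mul_sum, ENNReal.ofReal_exp_sum, div_eq_inv_mul, mul_assoc]
    _ = ∏ i, ∫⁻ ω, ENNReal.ofReal (exp (lam i / (4 * B ^ 2) * Z i ω ^ 2)) ∂μ :=
        lintegral_prod_eq_prod_lintegral_of_indepFun _ _ hsq fun i ↦ by fun_prop
    _ ≤ ∏ i, ENNReal.ofReal (exp (lam i / 2)) := Finset.prod_le_prod' fun i _ ↦ hfactor i
    _ = _ := by rw [← ENNReal.ofReal_exp_sum, Finset.sum_div]

lemma measure_ge_sum_mul_sq_le {ι κ : Type*} [Fintype ι] [Fintype κ] {B : ℝ} (hB : B ≠ 0)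
    {Y : ι → κ → Ω → ℝ} (hY : ∀ i j, Measurable (Y i j))
    (hindep : iIndepFun (fun p : ι × κ ↦ Y p.1 p.2) μ)
    (hsub : ∀ i j, HasSubgaussianMoment B (Y i j) μ) {lam : ι → ℝ}
    (hlam : ∀ i, lam i ∈ Set.Icc (0 : ℝ) 1) {c : EuclideanSpace ℝ κ} (hc : ‖c‖ = 1) (r : ℝ) :
    μ {ω | r ≤ ∑ i, lam i * (∑ j, c j * Y i j ω) ^ 2} ≤
      ENNReal.ofReal (exp ((∑ i, lam i) / 2 - r / (4 * B ^ 2))) := by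
  have hrows : iIndepFun (fun i ω ↦ ∑ j, c j * Y i j ω) μ :=
    (hindep.curry hY).comp (fun _ v ↦ ∑ j, c j * v j) fun _ ↦ by fun_prop
  have hrows_sub : ∀ i, HasSubgaussianMoment B (fun ω ↦ ∑ j, c j * Y i j ω) μ := fun i ↦ by
    have hrow := hindep.precomp (Prod.mk_right_injective (β := κ) i)
    simpa [hc] using HasSubgaussianMoment.sum_mul (hY i) hrow (hsub i) c
  calc _ ≤ ENNReal.ofReal (exp (-((4 * B ^ 2)⁻¹ * r))) * ∫⁻ ω, ENNReal.ofReal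
          (exp ((4 * B ^ 2)⁻¹ * ∑ i, lam i * (∑ j, c j * Y i j ω) ^ 2)) ∂μ :=
        measure_ge_le_exp_mul_lintegral_exp (by fun_prop) (by positivity) r
    _ ≤ ENNReal.ofReal (exp (-((4 * B ^ 2)⁻¹ * r))) *
          ENNReal.ofReal (exp ((∑ i, lam i) / 2)) := by
        gcongr
        exact lintegral_exp_sum_mul_sq_le hB (fun i ↦ by fun_prop) hrows hrows_sub hlam
    _ = _ := by
        rw [← ENNReal.ofReal_mul (exp_pos _).le, ← exp_add]
        ring_nf

end ProbabilityTheory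

theorem opNorm_tail_bound_subgaussian_general
    (d m : ℕ) (hm : 0 < m) (B : ℝ) (hB : 0 < B)
    (Ω : Type*) [MeasurableSpace Ω] (μ : Measure Ω)
    (Y : Fin d → Fin m → Ω → ℝ)
    (hmeas : ∀ i j, Measurable (Y i j))
    (hindep : iIndepFun
      (fun (p : Fin d × Fin m) ω => Y p.1 p.2 ω) μ)
    (hsub : ∀ i j (s : ℝ), ∫⁻ ω, ENNReal.ofReal (Real.exp (s * Y i j ω)) ∂μ ≤
      ENNReal.ofReal (Real.exp (B ^ 2 * s ^ 2 / 2)))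
    (lam : Fin d → ℝ) (hlam : ∀ i, lam i ∈ Set.Icc (0 : ℝ) 1)
    (t ε : ℝ) (ht : 0 ≤ t) (hε : ε ∈ Set.Ioo (0 : ℝ) 1) :
    μ {ω : Ω | t ≤
        ‖LinearMap.toContinuousLinearMap (Matrix.toEuclideanLin
          (Matrix.of fun (i : Fin d) (j : Fin m) => Real.sqrt (lam i) * Y i j ω))‖} ≤
      ENNReal.ofReal ((sphereCoveringNumber m ε : ℝ) *
        Real.exp ((∑ i, lam i) / 2 - t ^ 2 * (1 - ε) ^ 2 / (4 * B ^ 2))) := by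
  obtain ⟨hε₀, hε₁⟩ := hε
  have : NeZero m := ⟨hm.ne'⟩
  obtain ⟨C, hCcard, hCunit, hCnet⟩ := exists_finset_card_eq_sphereCoveringNumber m hε₀
  set A := fun ω ↦ LinearMap.toContinuousLinearMap (Matrix.toEuclideanLin
    (Matrix.of fun (i : Fin d) (j : Fin m) => Real.sqrt (lam i) * Y i j ω))
  have hcover : {ω | t ≤ ‖A ω‖} ⊆
      ⋃ c ∈ C, {ω | t ^ 2 * (1 - ε) ^ 2 ≤ ∑ i, lam i * (∑ j, c j * Y i j ω) ^ 2} := by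
    intro ω (hω : t ≤ ‖A ω‖)
    obtain ⟨c, hc, hAc⟩ := (A ω).exists_mem_net_mul_opNorm_le hCnet
    refine Set.mem_iUnion₂.2 ⟨c, hc, ?_⟩
    calc t ^ 2 * (1 - ε) ^ 2 = ((1 - ε) * t) ^ 2 := by ring
      _ ≤ ((1 - ε) * ‖A ω‖) ^ 2 := by gcongr
      _ ≤ ‖A ω c‖ ^ 2 := by gcongr
      _ = _ := norm_toEuclideanLin_sqrt_mul_sq (fun i ↦ (hlam i).1) (fun i j ↦ Y i j ω) c
  calc μ {ω | t ≤ ‖A ω‖}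
      ≤ ∑ c ∈ C, μ {ω | t ^ 2 * (1 - ε) ^ 2 ≤ ∑ i, lam i * (∑ j, c j * Y i j ω) ^ 2} :=
        (measure_mono hcover).trans (measure_biUnion_finset_le _ _)
    _ ≤ ∑ _c ∈ C, ENNReal.ofReal (exp ((∑ i, lam i) / 2 - t ^ 2 * (1 - ε) ^ 2 / (4 * B ^ 2))) :=
        Finset.sum_le_sum fun c hc ↦ measure_ge_sum_mul_sq_le hB.ne' hmeas hindep
          hsub hlam (hCunit c hc) _
    _ = _ := by
        rw [Finset.sum_const, nsmul_eq_mul, hCcard, ENNReal.ofReal_mul (by positivity),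
          ENNReal.ofReal_natCast]

/-- If `Y` is a `d × m` random matrix (`m ≤ d`) with independent
entries, each sub-Gaussian with moment `B`, and `Σ = diag(λ)` is diagonal PSD with
`Σ ≤ I`, then for all `t ≥ 0` and `ε ∈ (0,1)`,
`P[‖√Σ Y‖ ≥ t] ≤ N_m(ε) exp(trace(Σ)/2 − t²(1−ε)²/(4B²))`,
where `‖·‖` is the operator norm. -/
theorem opNorm_tail_bound_subgaussian
    (d m : ℕ) (hm : 0 < m) (hmd : m ≤ d) (B : ℝ) (hB : 0 < B)
    (Ω : Type*) [MeasurableSpace Ω] (μ : Measure Ω) [IsProbabilityMeasure μ]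
    (Y : Fin d → Fin m → Ω → ℝ)
    (hmeas : ∀ i j, Measurable (Y i j))
    (hindep : iIndepFun
      (fun (p : Fin d × Fin m) ω => Y p.1 p.2 ω) μ)
    (hsub : ∀ i j (s : ℝ), ∫⁻ ω, ENNReal.ofReal (Real.exp (s * Y i j ω)) ∂μ ≤
      ENNReal.ofReal (Real.exp (B ^ 2 * s ^ 2 / 2)))
    (lam : Fin d → ℝ) (hlam : ∀ i, lam i ∈ Set.Icc (0 : ℝ) 1)
    (t ε : ℝ) (ht : 0 ≤ t) (hε : ε ∈ Set.Ioo (0 : ℝ) 1) :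
    μ {ω : Ω | t ≤
        ‖LinearMap.toContinuousLinearMap (Matrix.toEuclideanLin
          (Matrix.of fun (i : Fin d) (j : Fin m) => Real.sqrt (lam i) * Y i j ω))‖} ≤
      ENNReal.ofReal ((sphereCoveringNumber m ε : ℝ) *
        Real.exp ((∑ i, lam i) / 2 - t ^ 2 * (1 - ε) ^ 2 / (4 * B ^ 2))) :=
  opNorm_tail_bound_subgaussian_general d m hm B hB Ω μ Y hmeas hindep hsub lam hlam t ε ht hε
end

section
/- Let X ∈ ℝ^d be a random vector and let B be a d×d positive semidefinite matrix such that for every u ∈ ℝ^d, E[exp(⟨u, X⟩)] ≤ exp(⟨B u, u⟩/2). Then for every t with 0 < t ≤ 1/(4·λ₁(B)), where λ₁(B) is the largest eigenvalue of B, one has E[exp(t·‖X‖₂²)] ≤ exp(2t·trace(B)). -/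
/-!
Gaussian linearization: up to the constant `(4πt)^{d/2}`, `exp (t‖x‖²)` is the Lebesgue integral
of `exp (⟨x, v⟩ - ‖v‖² / (4t))` over `v`. Integrating in `ω` and exchanging the integrals turns the
hypothesis on the moment generating function into the Gaussian integral of
`exp (⟨Bv, v⟩ / 2 - ‖v‖² / (4t))`, which in an orthonormal eigenbasis of `B` equals the same
constant times `∏ᵢ (1 - 2tλᵢ)^{-1/2}`. Finally `(1 - x)^{-1/2} ≤ exp x` for `0 ≤ x ≤ 1/2`.
-/

open MeasureTheory Matrix Real

section
variable {n R : Type*} [Fintype n] [DecidableEq n] [CommSemiring R]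

theorem vecMul_dotProduct_vecMul_self {U : Matrix n n R} (hU : U * Uᵀ = 1) (x : n → R) :
    x ᵥ* U ⬝ᵥ x ᵥ* U = x ⬝ᵥ x := by
  rw [← dotProduct_mulVec, ← mulVec_transpose, mulVec_mulVec, hU, one_mulVec]

theorem mulVec_dotProduct_mulVec_mulVec {U A : Matrix n n R} {d : n → R}
    (hUA : Uᵀ * A * U = diagonal d) (v : n → R) :
    U *ᵥ v ⬝ᵥ A *ᵥ (U *ᵥ v) = ∑ i, d i * v i ^ 2 := by
  rw [mulVec_mulVec, dotProduct_comm, dotProduct_mulVec, ← mulVec_transpose, mulVec_mulVec,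
    ← mul_assoc, hUA]
  simp only [dotProduct, mulVec_diagonal]
  exact Finset.sum_congr rfl fun i _ => by ring

end

namespace Matrix.IsHermitian
variable {n : Type*} [Fintype n] [DecidableEq n] {A : Matrix n n ℝ} (hA : A.IsHermitian)

theorem eigenvectorUnitary_mul_transpose :
    (hA.eigenvectorUnitary : Matrix n n ℝ) * (hA.eigenvectorUnitary : Matrix n n ℝ)ᵀ = 1 := by
  simpa [star_eq_conjTranspose] using Unitary.coe_mul_star_self hA.eigenvectorUnitary

theorem transpose_eigenvectorUnitary_mul_mul :
    (hA.eigenvectorUnitary : Matrix n n ℝ)ᵀ * A * hA.eigenvectorUnitary =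
      diagonal hA.eigenvalues := by
  simpa [Unitary.conjStarAlgAut_star_apply, star_eq_conjTranspose] using
    hA.conjStarAlgAut_star_eigenvectorUnitary

end Matrix.IsHermitian

theorem inv_one_sub_le_exp_two_mul {x : ℝ} (hx₀ : 0 ≤ x) (hx : x ≤ 1 / 2) :
    (1 - x)⁻¹ ≤ exp (2 * x) := by
  have h1x : 0 < 1 - x := by linarith
  calc (1 - x)⁻¹ = x / (1 - x) + 1 := by field_simp; ring
    _ ≤ exp (x / (1 - x)) := add_one_le_exp _
    _ ≤ exp (2 * x) := exp_le_exp.mpr <| (div_le_iff₀ h1x).mpr (by nlinarith)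

theorem inv_sqrt_one_sub_le_exp {x : ℝ} (hx₀ : 0 ≤ x) (hx : x ≤ 1 / 2) :
    (√(1 - x))⁻¹ ≤ exp x := by
  calc (√(1 - x))⁻¹ = √((1 - x)⁻¹) := (sqrt_inv _).symm
    _ ≤ √(exp x ^ 2) := sqrt_le_sqrt <| by
      rw [← exp_nat_mul]
      exact_mod_cast inv_one_sub_le_exp_two_mul hx₀ hx
    _ = exp x := sqrt_sq (exp_pos x).le

section
variable {ι : Type*} [Fintype ι] {b : ι → ℝ} (c : ι → ℝ)

theorem cexp_neg_sum_mul_sq_add_sum_mul_eq_ofReal_exp (v : ι → ℝ) :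
    Complex.exp (-∑ i, (b i : ℂ) * (v i : ℂ) ^ 2 + ∑ i, (c i : ℂ) * (v i : ℂ)) =
      (exp (∑ i, (c i * v i - b i * v i ^ 2)) : ℂ) := by
  rw [Finset.sum_sub_distrib]
  push_cast
  ring_nf

theorem integrable_exp_sum_mul_sub_mul_sq (hb : ∀ i, 0 < b i) :
    Integrable fun v : ι → ℝ => exp (∑ i, (c i * v i - b i * v i ^ 2)) := by
  have h := (GaussianFourier.integrable_cexp_neg_sum_mul_add (b := fun i => (b i : ℂ))
    (fun i => by simpa using hb i) (fun i => (c i : ℂ))).re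
  simpa only [cexp_neg_sum_mul_sq_add_sum_mul_eq_ofReal_exp, RCLike.re_to_complex,
    Complex.ofReal_re] using h

theorem integral_exp_sum_mul_sub_mul_sq (hb : ∀ i, 0 < b i) :
    ∫ v : ι → ℝ, exp (∑ i, (c i * v i - b i * v i ^ 2)) =
      ∏ i, √(π / b i) * exp (c i ^ 2 / (4 * b i)) := by
  have h := GaussianFourier.integral_cexp_neg_sum_mul_add (b := fun i => (b i : ℂ))
    (fun i => by simpa using hb i) (fun i => (c i : ℂ))
  have hfactor (i : ι) : ((π : ℂ) / b i) ^ (1 / 2 : ℂ) * Complex.exp ((c i : ℂ) ^ 2 / (4 * b i)) =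
      (√(π / b i) * exp (c i ^ 2 / (4 * b i)) : ℝ) := by
    rw [sqrt_eq_rpow, Complex.ofReal_mul, Complex.ofReal_cpow (div_nonneg pi_pos.le (hb i).le)]
    push_cast
    norm_num
  simp only [cexp_neg_sum_mul_sq_add_sum_mul_eq_ofReal_exp, hfactor, ← Complex.ofReal_prod] at h
  exact_mod_cast h

theorem lintegral_exp_sum_mul_sub_mul_sq (hb : ∀ i, 0 < b i) :
    ∫⁻ v : ι → ℝ, ENNReal.ofReal (exp (∑ i, (c i * v i - b i * v i ^ 2))) =
      ENNReal.ofReal (∏ i, √(π / b i) * exp (c i ^ 2 / (4 * b i))) := by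
  rw [← ofReal_integral_eq_lintegral_ofReal (integrable_exp_sum_mul_sub_mul_sq c hb)
    (.of_forall fun v => (exp_pos _).le), integral_exp_sum_mul_sub_mul_sq c hb]

end

section
variable {ι : Type*} [Fintype ι]

theorem ofReal_exp_mul_sum_sq_mul_eq_lintegral {t : ℝ} (ht : 0 < t) (c : ι → ℝ) :
    ENNReal.ofReal (exp (t * ∑ i, c i ^ 2)) * ENNReal.ofReal (∏ _i : ι, √(4 * π * t)) =
      ∫⁻ v : ι → ℝ, ENNReal.ofReal (exp (∑ i, (c i * v i - (4 * t)⁻¹ * v i ^ 2))) := by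
  rw [lintegral_exp_sum_mul_sub_mul_sq (b := fun _ => (4 * t)⁻¹) c fun _ => by positivity,
    ← ENNReal.ofReal_mul (exp_pos _).le, Finset.prod_mul_distrib, ← exp_sum, mul_comm,
    Finset.mul_sum]
  congr 4 <;> ext i <;> field_simp

theorem lintegral_exp_mul_sum_sq_le_prod_of_mgf_le {Ω : Type*} [MeasurableSpace Ω]
    {μ : Measure Ω} [SFinite μ] {Y : Ω → ι → ℝ} (hY : Measurable Y) {σ : ι → ℝ} {t : ℝ}
    (ht : 0 < t) (htσ : ∀ i, 2 * t * σ i < 1)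
    (hmgf : ∀ v : ι → ℝ, ∫⁻ ω, ENNReal.ofReal (exp (∑ i, v i * Y ω i)) ∂μ ≤
      ENNReal.ofReal (exp ((∑ i, σ i * v i ^ 2) / 2))) :
    ∫⁻ ω, ENNReal.ofReal (exp (t * ∑ i, Y ω i ^ 2)) ∂μ ≤
      ENNReal.ofReal (∏ i, (√(1 - 2 * t * σ i))⁻¹) := by
  set K : ℝ := ∏ _i : ι, √(4 * π * t)
  have hK : 0 < K := Finset.prod_pos fun _ _ => by positivity
  have hb (i : ι) : (4 * t)⁻¹ - σ i / 2 = (1 - 2 * t * σ i) / (4 * t) := by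
    field_simp
    ring
  have hpoint (v : ι → ℝ) :
      ∫⁻ ω, ENNReal.ofReal (exp (∑ i, (Y ω i * v i - (4 * t)⁻¹ * v i ^ 2))) ∂μ ≤
        ENNReal.ofReal (exp (∑ i, (0 * v i - ((4 * t)⁻¹ - σ i / 2) * v i ^ 2))) := by
    have hsplit (ω : Ω) : ENNReal.ofReal (exp (∑ i, (Y ω i * v i - (4 * t)⁻¹ * v i ^ 2))) =
        ENNReal.ofReal (exp (∑ i, v i * Y ω i)) *
          ENNReal.ofReal (exp (-∑ i, (4 * t)⁻¹ * v i ^ 2)) := by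
      rw [← ENNReal.ofReal_mul (exp_pos _).le, ← exp_add, Finset.sum_sub_distrib]
      simp only [mul_comm (Y ω _), sub_eq_add_neg]
    calc ∫⁻ ω, ENNReal.ofReal (exp (∑ i, (Y ω i * v i - (4 * t)⁻¹ * v i ^ 2))) ∂μ
        = (∫⁻ ω, ENNReal.ofReal (exp (∑ i, v i * Y ω i)) ∂μ) *
            ENNReal.ofReal (exp (-∑ i, (4 * t)⁻¹ * v i ^ 2)) := by
          simp only [hsplit, lintegral_mul_const' _ _ ENNReal.ofReal_ne_top]
      _ ≤ ENNReal.ofReal (exp ((∑ i, σ i * v i ^ 2) / 2)) *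
            ENNReal.ofReal (exp (-∑ i, (4 * t)⁻¹ * v i ^ 2)) := by
          gcongr
          exact hmgf v
      _ = _ := by
          rw [← ENNReal.ofReal_mul (exp_pos _).le, ← exp_add, Finset.sum_div,
            ← Finset.sum_neg_distrib, ← Finset.sum_add_distrib]
          congr 3 with i
          ring
  have hprod : ∏ i, √(π / ((4 * t)⁻¹ - σ i / 2)) * exp (0 ^ 2 / (4 * ((4 * t)⁻¹ - σ i / 2))) =
      (∏ i, (√(1 - 2 * t * σ i))⁻¹) * K := by
    rw [← Finset.prod_mul_distrib]
    refine Finset.prod_congr rfl fun i _ => ?_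
    rw [hb, div_div_eq_mul_div, sqrt_div' _ (by linarith [htσ i])]
    simp only [zero_pow two_ne_zero, zero_div, exp_zero, mul_one]
    rw [div_eq_inv_mul]
    ring_nf
  rw [← ENNReal.mul_le_mul_iff_left (ENNReal.ofReal_pos.mpr hK).ne' ENNReal.ofReal_ne_top,
    ← ENNReal.ofReal_mul (by positivity), ← hprod]
  calc (∫⁻ ω, ENNReal.ofReal (exp (t * ∑ i, Y ω i ^ 2)) ∂μ) * ENNReal.ofReal K
      = ∫⁻ ω, (∫⁻ v : ι → ℝ,
          ENNReal.ofReal (exp (∑ i, (Y ω i * v i - (4 * t)⁻¹ * v i ^ 2)))) ∂μ := by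
        rw [← lintegral_mul_const' _ _ ENNReal.ofReal_ne_top]
        exact lintegral_congr fun ω => ofReal_exp_mul_sum_sq_mul_eq_lintegral ht (Y ω)
    _ = ∫⁻ v : ι → ℝ, ∫⁻ ω, ENNReal.ofReal (exp (∑ i, (Y ω i * v i - (4 * t)⁻¹ * v i ^ 2))) ∂μ :=
        lintegral_lintegral_swap (by fun_prop)
    _ ≤ _ := lintegral_mono hpoint
    _ = _ := lintegral_exp_sum_mul_sub_mul_sq _ fun i => by
          rw [hb]
          exact div_pos (by linarith [htσ i]) (by positivity)

end

/-- If `X ∈ ℝ^d` is a random vector and `B` is a PSD matrix with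
`E[exp⟨u,X⟩] ≤ exp(⟨Bu,u⟩/2)` for all `u`, then for `0 < t ≤ 1/(4λ₁(B))`
(equivalently `t · λᵢ(B) ≤ 1/4` for every eigenvalue), one has
`E[exp(t‖X‖²)] ≤ exp(2t · trace B)`. -/
theorem mgf_norm_sq_of_subgaussian_vector
    (d : ℕ) (Ω : Type*) [MeasurableSpace Ω] (μ : Measure Ω) [IsProbabilityMeasure μ]
    (X : Ω → Fin d → ℝ) (hmeas : ∀ i, Measurable fun ω => X ω i)
    (B : Matrix (Fin d) (Fin d) ℝ) (hB : B.PosSemidef)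
    (hmgf : ∀ u : Fin d → ℝ,
      ∫⁻ ω, ENNReal.ofReal (Real.exp (∑ i, u i * X ω i)) ∂μ ≤
        ENNReal.ofReal (Real.exp ((u ⬝ᵥ B.mulVec u) / 2)))
    (t : ℝ) (ht : 0 < t)
    (htB : ∀ i : Fin d, t * hB.1.eigenvalues i ≤ 1 / 4) :
    ∫⁻ ω, ENNReal.ofReal (Real.exp (t * ∑ i, (X ω i) ^ 2)) ∂μ ≤
      ENNReal.ofReal (Real.exp (2 * t * B.trace)) := by
  have hU := hB.1.eigenvectorUnitary_mul_transpose
  have hUB := hB.1.transpose_eigenvectorUnitary_mul_mul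
  generalize (hB.1.eigenvectorUnitary : Matrix (Fin d) (Fin d) ℝ) = U at hU hUB
  have hY : Measurable fun ω => X ω ᵥ* U := by
    have := measurable_pi_iff.mpr hmeas
    fun_prop
  have hnorm (ω : Ω) : ∑ i, (X ω ᵥ* U) i ^ 2 = ∑ i, X ω i ^ 2 := by
    simpa only [dotProduct, sq] using vecMul_dotProduct_vecMul_self hU (X ω)
  have hmgfY (v : Fin d → ℝ) : ∫⁻ ω, ENNReal.ofReal (exp (∑ i, v i * (X ω ᵥ* U) i)) ∂μ ≤
      ENNReal.ofReal (exp ((∑ i, hB.1.eigenvalues i * v i ^ 2) / 2)) := by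
    have hrot (ω : Ω) : ∑ i, v i * (X ω ᵥ* U) i = ∑ i, (U *ᵥ v) i * X ω i := by
      simpa only [dotProduct] using (dotProduct_comm _ _).trans
        ((dotProduct_mulVec (X ω) U v).symm.trans (dotProduct_comm _ _))
    simpa only [hrot, mulVec_dotProduct_mulVec_mulVec hUB] using hmgf (U *ᵥ v)
  have hbound := lintegral_exp_mul_sum_sq_le_prod_of_mgf_le hY ht
    (fun i => by linarith [htB i]) hmgfY
  simp only [hnorm] at hbound
  refine hbound.trans (ENNReal.ofReal_le_ofReal ?_)
  calc ∏ i, (√(1 - 2 * t * hB.1.eigenvalues i))⁻¹ ≤ ∏ i, exp (2 * t * hB.1.eigenvalues i) :=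
        Finset.prod_le_prod (fun i _ => by positivity) fun i _ =>
          inv_sqrt_one_sub_le_exp (by have := hB.eigenvalues_nonneg i; positivity)
            (by linarith [htB i])
    _ = exp (2 * t * B.trace) := by
        rw [← exp_sum, ← Finset.mul_sum, hB.1.trace_eq_sum_eigenvalues]
        rfl
end
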